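/- arXiv:2512.05690 — 5 statements merged into one kernel-verified Lean document; each statement's English description precedes it below -/
import Mathlib

section
/- For every x ∈ F with ‖x‖ > 1, the sequence ([x^n])_{n≥1} is NOT uniformly distributed in O. -/
open Filter MeasureTheory
open scoped Classical

noncomputable section

/-- The nonarchimedean absolute value on `K⸨T⸩`: `‖x‖ = q^{-v}` where `v` is the order
of the lowest nonzero coefficient of `x`, and `‖0‖ = 0`; here `q = #K`. -/
def lnorm {K : Type*} [Field K] (q : ℕ) (x : LaurentSeries K) : ℝ :=
  if x = 0 then 0 else (q : ℝ) ^ (-(HahnSeries.order x))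

/-- The integral part `[x] = ∑_{i ≥ 0} c_i T^i` of a Laurent series `x = ∑_i c_i T^i`. -/
def lintPart {K : Type*} [Field K] (x : LaurentSeries K) : LaurentSeries K where
  coeff i := if 0 ≤ i then x.coeff i else 0
  isPWO_support' := x.isPWO_support'.mono (by
    intro i hi
    simp only [Function.mem_support] at hi ⊢
    intro h
    apply hi
    simp [h])

/-- A sequence `(y_m)_{m ≥ 1}` in `O = K⟦T⟧ = {x : ‖x‖ ≤ 1}` is uniformly distributed in
`O`: for every `a ∈ O` and `k : ℕ`, `(1/N) #{1 ≤ m ≤ N : ‖y m - a‖ ≤ q^{-k}} → q^{-k}`. -/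
def LIsUnifDistrib {K : Type*} [Field K] (q : ℕ) (y : ℕ → LaurentSeries K) : Prop :=
  ∀ a : LaurentSeries K, lnorm q a ≤ 1 → ∀ k : ℕ,
    Tendsto (fun N : ℕ =>
        (((Finset.Icc 1 N).filter fun m => lnorm q (y m - a) ≤ (q : ℝ) ^ (-(k : ℤ))).card : ℝ) / N)
      atTop (nhds ((q : ℝ) ^ (-(k : ℤ))))

section Aux
variable {K : Type*} [Field K]

lemma lintPart_coeff (x : LaurentSeries K) (i : ℤ) :
    (lintPart x).coeff i = if 0 ≤ i then x.coeff i else 0 := rfl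

lemma lcoeff_sum {ι : Type*} (s : Finset ι) (f : ι → LaurentSeries K) (i : ℤ) :
    (∑ j ∈ s, f j).coeff i = ∑ j ∈ s, (f j).coeff i :=
  map_sum (AddMonoidHom.mk' (fun z : LaurentSeries K => z.coeff i)
    (fun _ _ => HahnSeries.coeff_add)) f s

lemma lcoeff_pow_char (p : ℕ) (hp : p.Prime) [CharP K p]
    (y : LaurentSeries K) (j : ℤ) (hj : 0 < j) (hpj : ¬ ((p : ℤ) ∣ j)) :
    (y ^ p).coeff j = 0 := by
  haveI := Fact.mk hp
  haveI : CharP (LaurentSeries K) p := charP_of_injective_ringHom HahnSeries.C_injective p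
  rcases eq_or_ne y 0 with rfl | hy0
  · simp [zero_pow hp.ne_zero]
  have hfin : (y.support ∩ Set.Iic j).Finite :=
    (Set.finite_Icc y.order j).subset (by
      rintro i ⟨hi1, hi2⟩
      exact ⟨HahnSeries.order_le_of_coeff_ne_zero hi1, hi2⟩)
  set S : Finset ℤ := hfin.toFinset with hS
  set y₁ : LaurentSeries K := ∑ i ∈ S, HahnSeries.single i (y.coeff i) with hy₁
  have hy₁c : ∀ i : ℤ, y₁.coeff i = if i ∈ S then y.coeff i else 0 := by
    intro i
    rw [hy₁, lcoeff_sum]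
    simp only [HahnSeries.coeff_single]
    convert Finset.sum_ite_eq S i (fun x => y.coeff x) using 2
    simp
  have h2 : ∀ i : ℤ, i ≤ j → (y - y₁).coeff i = 0 := by
    intro i hij
    rw [HahnSeries.coeff_sub, hy₁c]
    by_cases h : y.coeff i = 0
    · simp [h]
    · have hiS : i ∈ S := by
        rw [hS, Set.Finite.mem_toFinset]
        exact ⟨h, hij⟩
      simp [hiS]
  have hsplit : y ^ p = y₁ ^ p + (y - y₁) ^ p := by
    rw [← add_pow_char]
    congr 1
    ring
  rw [hsplit, HahnSeries.coeff_add]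
  have hA : (y₁ ^ p).coeff j = 0 := by
    rw [hy₁, sum_pow_char, lcoeff_sum]
    apply Finset.sum_eq_zero
    intro i _
    rw [HahnSeries.single_pow]
    apply HahnSeries.coeff_single_of_ne
    intro hji
    apply hpj
    refine ⟨i, ?_⟩
    rw [hji, nsmul_eq_mul]
  have hB : ((y - y₁) ^ p).coeff j = 0 := by
    rcases eq_or_ne (y - y₁) 0 with h0 | h0
    · simp [h0, zero_pow hp.ne_zero]
    · apply HahnSeries.coeff_eq_zero_of_lt_order
      rw [HahnSeries.order_pow, nsmul_eq_mul]
      have hord : j < (y - y₁).order := by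
        by_contra hle
        push_neg at hle
        exact h0 (HahnSeries.coeff_order_eq_zero.mp (h2 _ hle))
      have hp1 : (1 : ℤ) ≤ (p : ℤ) := by exact_mod_cast hp.one_lt.le
      nlinarith [hord, hj]
  rw [hA, hB, add_zero]

lemma lnorm_le_of_coeff_eq_zero {q : ℕ} (hq : 2 ≤ q) (z : LaurentSeries K) (k : ℤ)
    (h : ∀ i : ℤ, i < k → z.coeff i = 0) : lnorm q z ≤ (q : ℝ) ^ (-k) := by
  rw [lnorm]
  split_ifs with h0
  · positivity
  · apply zpow_le_zpow_right₀ (by exact_mod_cast Nat.one_le_iff_ne_zero.mpr (by omega) : (1:ℝ) ≤ q)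
    have hk : k ≤ z.order := by
      by_contra hc
      push_neg at hc
      exact h0 (HahnSeries.coeff_order_eq_zero.mp (h _ hc))
    omega

end Aux

/-- **Theorem 1.4(a)**: let `K` be a finite field with `q` elements.  For every
`x ∈ K⸨T⸩` with `‖x‖ > 1`, the sequence of integral parts `([x^n])_{n ≥ 1}` is NOT
uniformly distributed in `O = K⟦T⟧`. -/
theorem not_unifDistrib_laurentSeries_charP
    {K : Type*} [Field K] [Fintype K] (q p : ℕ) (hq : q = Fintype.card K)
    (hp : p.Prime) [CharP K p]
    (x : LaurentSeries K) (hx : 1 < lnorm q x) :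
    ¬ LIsUnifDistrib q (fun n => lintPart (x ^ n)) := by
  intro hud
  haveI := Fact.mk hp
  have hp2 : 2 ≤ p := hp.two_le
  have hppos : 0 < p := by omega
  have hq2 : 2 ≤ q := by rw [hq]; exact Fintype.one_lt_card
  have hpq : p ≤ q := by
    obtain ⟨n, -, hcard⟩ := FiniteField.card K p
    rw [hq, hcard]
    exact Nat.le_self_pow n.2.ne' p
  -- the map enumerating the "free" coefficient indices {0, 2, 3, ..., p}
  set e : Fin p → ℤ := fun j => if (j : ℕ) = 0 then 0 else (j : ℤ) + 1 with he
  have he_nonneg : ∀ j, 0 ≤ e j := by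
    intro j; rw [he]; dsimp only; split_ifs <;> omega
  have he_ne1 : ∀ j, e j ≠ 1 := by
    intro j; rw [he]; dsimp only; split_ifs with h <;> omega
  have he_nep : ∀ j, e j ≠ (p : ℤ) + 1 := by
    intro j; have hjlt := j.isLt; rw [he]; dsimp only; split_ifs <;> omega
  have he_inj : Function.Injective e := by
    intro a b hab
    have ha := a.isLt; have hb := b.isLt
    rw [he] at hab; dsimp only at hab
    split_ifs at hab with h1 h2 h2 <;> (apply Fin.ext; omega)
  have he_surj : ∀ i : ℤ, 0 ≤ i → i < (p : ℤ) + 2 → i ≠ 1 → i ≠ (p : ℤ) + 1 →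
      ∃ j, e j = i := by
    intro i h0 hik h1 hp1
    lift i to ℕ using h0
    rcases Nat.eq_zero_or_pos i with rfl | hi
    · exact ⟨⟨0, hppos⟩, by simp [he]⟩
    · have hi2 : 2 ≤ i := by omega
      have hilt : i - 1 < p := by omega
      refine ⟨⟨i - 1, hilt⟩, ?_⟩
      rw [he]; dsimp only
      rw [if_neg (by omega)]
      push_cast [Nat.cast_sub (by omega : 1 ≤ i)]
      ring
  set g : (Fin p → K) → LaurentSeries K := fun c => ∑ j, HahnSeries.single (e j) (c j) with hg
  have hg_coeff_e : ∀ (c : Fin p → K) (j : Fin p), (g c).coeff (e j) = c j := by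
    intro c j
    rw [hg]; dsimp only
    rw [lcoeff_sum, Finset.sum_eq_single j]
    · rw [HahnSeries.coeff_single_same]
    · intro b _ hbj
      exact HahnSeries.coeff_single_of_ne (fun h => hbj (he_inj h).symm)
    · intro h; exact absurd (Finset.mem_univ j) h
  have hg_coeff_zero : ∀ (c : Fin p → K) (i : ℤ), (∀ j, e j ≠ i) → (g c).coeff i = 0 := by
    intro c i hne
    rw [hg]; dsimp only; rw [lcoeff_sum]
    exact Finset.sum_eq_zero fun j _ => HahnSeries.coeff_single_of_ne (fun h => hne j h.symm)
  set A : Finset (LaurentSeries K) := Finset.image g Finset.univ with hA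
  have hmemA : ∀ a ∈ A, lnorm q a ≤ 1 := by
    intro a ha
    rw [hA, Finset.mem_image] at ha
    obtain ⟨c, -, rfl⟩ := ha
    have h := lnorm_le_of_coeff_eq_zero hq2 (g c) 0
      (fun i hi => hg_coeff_zero c i (fun j hji => by have := he_nonneg j; omega))
    simpa using h
  -- coverage of multiples of p
  have hcover : ∀ m : ℕ, p ∣ m →
      ∃ a ∈ A, lnorm q (lintPart (x ^ m) - a) ≤ (q : ℝ) ^ (-((p + 2 : ℕ) : ℤ)) := by
    rintro m ⟨m', rfl⟩
    have hyz : ∀ i : ℤ, 0 < i → ¬ ((p : ℤ) ∣ i) → (lintPart (x ^ (p * m'))).coeff i = 0 := by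
      intro i h1 h3
      rw [lintPart_coeff, if_pos h1.le]
      have hxm : x ^ (p * m') = (x ^ m') ^ p := by rw [mul_comm, pow_mul]
      rw [hxm]
      exact lcoeff_pow_char p hp _ i h1 h3
    refine ⟨g (fun j => (lintPart (x ^ (p * m'))).coeff (e j)),
      Finset.mem_image_of_mem _ (Finset.mem_univ _), ?_⟩
    apply lnorm_le_of_coeff_eq_zero hq2
    intro i hik
    rw [HahnSeries.coeff_sub]
    rcases lt_or_ge i 0 with hi0 | hi0
    · rw [hg_coeff_zero _ i (fun j hji => by have := he_nonneg j; omega),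
        lintPart_coeff, if_neg (by omega)]
      simp
    · by_cases hsp : i = 1 ∨ i = (p : ℤ) + 1
      · rcases hsp with rfl | rfl
        · rw [hyz 1 one_pos (fun hd => by have := Int.le_of_dvd one_pos hd; omega),
            hg_coeff_zero _ 1 (fun j hji => he_ne1 j hji)]
          simp
        · rw [hyz _ (by omega) (fun hd => by
              have h1 : (p : ℤ) ∣ 1 := (dvd_add_right dvd_rfl).mp hd
              have := Int.le_of_dvd one_pos h1; omega),
            hg_coeff_zero _ _ (fun j hji => he_nep j hji)]
          simp
      · push_neg at hsp
        obtain ⟨j, rfl⟩ := he_surj i hi0 (by push_cast at hik; omega) hsp.1 hsp.2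
        rw [hg_coeff_e]
        simp
  -- counting
  have hcard : ∀ N : ℕ, N / p ≤ ∑ a ∈ A, ((Finset.Icc 1 N).filter fun m =>
      lnorm q (lintPart (x ^ m) - a) ≤ (q : ℝ) ^ (-((p + 2 : ℕ) : ℤ))).card := by
    intro N
    have hsub : ((Finset.Icc 1 N).filter (fun m => p ∣ m)) ⊆
        A.biUnion (fun a => (Finset.Icc 1 N).filter fun m =>
          lnorm q (lintPart (x ^ m) - a) ≤ (q : ℝ) ^ (-((p + 2 : ℕ) : ℤ))) := by
      intro m hm
      rw [Finset.mem_filter] at hm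
      obtain ⟨a, haA, hle⟩ := hcover m hm.2
      rw [Finset.mem_biUnion]
      exact ⟨a, haA, Finset.mem_filter.mpr ⟨hm.1, hle⟩⟩
    calc N / p = ((Finset.Icc 1 N).filter (fun m => p ∣ m)).card := by
          rw [← Nat.Ioc_filter_dvd_card_eq_div N p, ← Finset.Icc_add_one_left_eq_Ioc, zero_add]
      _ ≤ _ := le_trans (Finset.card_le_card hsub) Finset.card_biUnion_le
  -- limits
  have hlim1 : Tendsto (fun N : ℕ => ((N / p : ℕ) : ℝ) / N) atTop (nhds (1 / (p : ℝ))) := by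
    have hppos' : (0 : ℝ) < p := by exact_mod_cast hppos
    have hub : ∀ N : ℕ, ((N / p : ℕ) : ℝ) / N ≤ 1 / p := by
      intro N
      rcases Nat.eq_zero_or_pos N with rfl | hN
      · simp
      · have hNpos : (0 : ℝ) < N := by exact_mod_cast hN
        rw [div_le_div_iff₀ hNpos hppos', one_mul]
        exact_mod_cast Nat.div_mul_le_self N p
    have hlb : ∀ N : ℕ, 1 ≤ N → 1 / (p : ℝ) - 1 / N ≤ ((N / p : ℕ) : ℝ) / N := by
      intro N hN
      have hNpos : (0 : ℝ) < N := by exact_mod_cast hN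
      have hmod : (N : ℝ) < p * ((N / p : ℕ) : ℝ) + p := by
        have h1 : p * (N / p) + N % p = N := Nat.div_add_mod N p
        have h2 : N % p < p := Nat.mod_lt N hppos
        have h1' : (p : ℝ) * ((N / p : ℕ) : ℝ) + ((N % p : ℕ) : ℝ) = N := by exact_mod_cast h1
        have h2' : ((N % p : ℕ) : ℝ) < p := by exact_mod_cast h2
        linarith
      have key : (N : ℝ) / p - 1 ≤ ((N / p : ℕ) : ℝ) := by
        rw [div_sub_one (ne_of_gt hppos'), div_le_iff₀ hppos']
        linarith
      have heq : 1 / (p : ℝ) - 1 / N = ((N : ℝ) / p - 1) / N := by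
        field_simp
      rw [heq]
      exact (div_le_div_iff_of_pos_right hNpos).mpr key
    have hl : Tendsto (fun N : ℕ => 1 / (p : ℝ) - 1 / N) atTop (nhds (1 / (p : ℝ))) := by
      have h0 := tendsto_one_div_atTop_nhds_zero_nat (𝕜 := ℝ)
      simpa using tendsto_const_nhds.sub h0
    exact tendsto_of_tendsto_of_tendsto_of_le_of_le' hl tendsto_const_nhds
      (eventually_atTop.mpr ⟨1, hlb⟩) (Eventually.of_forall hub)
  have hlim2 : Tendsto (fun N : ℕ => ∑ a ∈ A,
      (((Finset.Icc 1 N).filter fun m =>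
        lnorm q (lintPart (x ^ m) - a) ≤ (q : ℝ) ^ (-((p + 2 : ℕ) : ℤ))).card : ℝ) / N)
      atTop (nhds (∑ _a ∈ A, (q : ℝ) ^ (-((p + 2 : ℕ) : ℤ)))) :=
    tendsto_finset_sum _ (fun a ha => hud a (hmemA a ha) (p + 2))
  have hineq : ∀ N : ℕ, ((N / p : ℕ) : ℝ) / N ≤ ∑ a ∈ A,
      (((Finset.Icc 1 N).filter fun m =>
        lnorm q (lintPart (x ^ m) - a) ≤ (q : ℝ) ^ (-((p + 2 : ℕ) : ℤ))).card : ℝ) / N := by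
    intro N
    rw [← Finset.sum_div]
    rcases Nat.eq_zero_or_pos N with rfl | hN
    · simp
    · have hNpos : (0 : ℝ) < N := by exact_mod_cast hN
      apply (div_le_div_iff_of_pos_right hNpos).mpr
      exact_mod_cast hcard N
  have hfinal : 1 / (p : ℝ) ≤ ∑ _a ∈ A, (q : ℝ) ^ (-((p + 2 : ℕ) : ℤ)) :=
    le_of_tendsto_of_tendsto' hlim1 hlim2 hineq
  rw [Finset.sum_const, nsmul_eq_mul] at hfinal
  have hqpos : (0 : ℝ) < q := by
    have : (2 : ℝ) ≤ q := by exact_mod_cast hq2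
    linarith
  have hAcard : (A.card : ℝ) ≤ (q : ℝ) ^ (p : ℕ) := by
    have h1 : A.card ≤ Fintype.card (Fin p → K) := by
      rw [hA]
      simpa using Finset.card_image_le (s := (Finset.univ : Finset (Fin p → K))) (f := g)
    have h2 : Fintype.card (Fin p → K) = q ^ p := by
      rw [Fintype.card_fun, Fintype.card_fin, hq]
    calc (A.card : ℝ) ≤ (Fintype.card (Fin p → K) : ℝ) := by exact_mod_cast h1
      _ = (q : ℝ) ^ (p : ℕ) := by rw [h2]; push_cast; ring
  have hle2 : 1 / (p : ℝ) ≤ (q : ℝ) ^ (-(2 : ℤ)) := by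
    calc 1 / (p : ℝ) ≤ (A.card : ℝ) * (q : ℝ) ^ (-((p + 2 : ℕ) : ℤ)) := hfinal
      _ ≤ (q : ℝ) ^ (p : ℕ) * (q : ℝ) ^ (-((p + 2 : ℕ) : ℤ)) :=
          mul_le_mul_of_nonneg_right hAcard (by positivity)
      _ = (q : ℝ) ^ (-(2 : ℤ)) := by
          rw [← zpow_natCast (q : ℝ) p, ← zpow_add₀ (ne_of_gt hqpos)]
          congr 1
          push_cast
          ring
  have hppos' : (0 : ℝ) < p := by exact_mod_cast hppos
  have hq2' : (2 : ℝ) ≤ q := by exact_mod_cast hq2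
  have hpq' : (p : ℝ) ≤ q := by exact_mod_cast hpq
  have hzp : (q : ℝ) ^ (-(2 : ℤ)) = 1 / ((q : ℝ) * q) := by
    rw [zpow_neg, one_div]
    congr 1
    rw [show (2 : ℤ) = ((2 : ℕ) : ℤ) from rfl, zpow_natCast]
    ring
  rw [hzp] at hle2
  have hqq : (q : ℝ) * q ≤ p := by
    have h := (div_le_div_iff₀ hppos' (by positivity : (0:ℝ) < (q:ℝ)*q)).mp hle2
    linarith
  nlinarith


end
end

section
/- Let f, g : O → F be scaling maps of scaling ratios q^{λ_f} and q^{λ_g} respectively, with integers λ_f > λ_g ≥ 0, and define f̃(x) := [f(x)], g̃(x) := [g(x)]. Let D ⊆ O be a ball of radius q^{-γ} for an integer γ with 0 ≤ γ ≤ λ_f − λ_g. Then μ( f̃⁻¹(D) ∩ g̃⁻¹(D) ) = μ(D)². -/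
open Filter MeasureTheory Metric
open scoped Classical
open scoped ENNReal

/-- `y` is a "fractional part": a finite sum `∑_{n=v}^{-1} c_n π^n` with digits `c_n ∈ C`. -/
def IsFracSum {F : Type*} [NormedField F] (C : Set F) (π : F) (y : F) : Prop :=
  ∃ (v : ℕ) (c : ℤ → F), (∀ n, c n ∈ C) ∧
    y = ∑ n ∈ Finset.Ico (-(v : ℤ)) 0, c n * π ^ n

/-- An "isometry" of a compact set onto itself is surjective. -/
lemma comp_isom_surjOn {X : Type*} [MetricSpace X] {K : Set X} (hK : IsCompact K)
    {e : X → X} (he : ∀ u ∈ K, ∀ v ∈ K, dist (e u) (e v) = dist u v)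
    (hm : Set.MapsTo e K K) : K ⊆ e '' K := by
  intro z hz
  have hcont : ContinuousOn e K := by
    apply LipschitzOnWith.continuousOn (K := 1)
    intro u hu v hv
    rw [edist_dist, edist_dist, he u hu v hv, ENNReal.coe_one, one_mul]
  have himg : IsCompact (e '' K) := hK.image_of_continuousOn hcont
  have hiter : ∀ n, ∀ u ∈ K, ∀ v ∈ K, dist (e^[n] u) (e^[n] v) = dist u v := by
    intro n
    induction n with
    | zero => simp
    | succ n ih =>
      intro u hu v hv
      rw [Function.iterate_succ_apply', Function.iterate_succ_apply']
      rw [he _ (hm.iterate n hu) _ (hm.iterate n hv)]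
      exact ih u hu v hv
  suffices hcl : z ∈ closure (e '' K) by rwa [himg.isClosed.closure_eq] at hcl
  rw [Metric.mem_closure_iff]
  intro ε hε
  set u : ℕ → X := fun n => e^[n] z with hu
  have humem : ∀ n, u n ∈ K := fun n => hm.iterate n hz
  obtain ⟨w, -, φ, hφ, hconv⟩ := hK.tendsto_subseq humem
  obtain ⟨N, hN⟩ := (Metric.tendsto_atTop.1 hconv) (ε / 2) (by linarith)
  have h1 : dist (u (φ N)) (u (φ (N + 1))) < ε := by
    have a1 := hN N le_rfl
    have a2 := hN (N + 1) (by omega)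
    calc dist (u (φ N)) (u (φ (N + 1)))
        ≤ dist ((u ∘ φ) N) w + dist ((u ∘ φ) (N + 1)) w := dist_triangle_right _ _ _
      _ < ε := by
          have b1 : dist (u (φ N)) w < ε / 2 := a1
          have b2 : dist (u (φ (N+1))) w < ε / 2 := a2
          linarith
  set k := φ (N + 1) - φ N with hk
  have hk1 : 1 ≤ k := by
    have : φ N < φ (N + 1) := hφ (Nat.lt_succ_self N)
    omega
  have h2 : dist z (u k) < ε := by
    have : u (φ (N + 1)) = e^[φ N] (u k) := by
      rw [hu]
      simp only [← Function.iterate_add_apply]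
      congr 1
      omega
    calc dist z (u k) = dist (e^[φ N] z) (e^[φ N] (u k)) :=
          (hiter (φ N) z hz (u k) (humem k)).symm
      _ = dist (u (φ N)) (u (φ (N + 1))) := by rw [this]
      _ < ε := h1
  refine ⟨u k, ?_, h2⟩
  have huk : u k = e (u (k - 1)) := by
    have hkk : k = (k - 1) + 1 := by omega
    show e^[k] z = e (e^[k-1] z)
    conv_lhs => rw [hkk]
    rw [Function.iterate_succ_apply']
  exact huk ▸ Set.mem_image_of_mem e (humem (k - 1))


lemma fracSum_eq_of_norm_le_one {F : Type*} [NormedField F] [IsUltrametricDist F]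
    (q : ℕ) (hq : 1 < q) (π : F) (hπ : ‖π‖ = (q : ℝ)⁻¹)
    (C : Set F) (hC0 : (0 : F) ∈ C) (hCO : ∀ c ∈ C, ‖c‖ ≤ 1)
    (hCrep : ∀ x : F, ‖x‖ ≤ 1 → ∃! c, c ∈ C ∧ ‖x - c‖ < 1)
    {y₁ y₂ : F} (h₁ : IsFracSum C π y₁) (h₂ : IsFracSum C π y₂)
    (h : ‖y₁ - y₂‖ ≤ 1) : y₁ = y₂ := by
  have hq1 : (1 : ℝ) < (q : ℝ) := by exact_mod_cast hq
  obtain ⟨v₁, c₁, hc₁, hy₁⟩ := h₁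
  obtain ⟨v₂, c₂, hc₂, hy₂⟩ := h₂
  set V : ℕ := max v₁ v₂ with hV
  set d₁ : ℤ → F := fun n => if -(v₁ : ℤ) ≤ n then c₁ n else 0 with hd₁def
  set d₂ : ℤ → F := fun n => if -(v₂ : ℤ) ≤ n then c₂ n else 0 with hd₂def
  have hd₁C : ∀ n, d₁ n ∈ C := by
    intro n; by_cases hn : -(v₁ : ℤ) ≤ n <;> simp [hd₁def, hn, hc₁, hC0]
  have hd₂C : ∀ n, d₂ n ∈ C := by
    intro n; by_cases hn : -(v₂ : ℤ) ≤ n <;> simp [hd₂def, hn, hc₂, hC0]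
  have hsum : ∀ (v : ℕ) (c : ℤ → F), v ≤ V →
      ∑ n ∈ Finset.Ico (-(v : ℤ)) 0, c n * π ^ n
        = ∑ n ∈ Finset.Ico (-(V : ℤ)) 0, (if -(v : ℤ) ≤ n then c n else 0) * π ^ n := by
    intro v c hv
    have hvV : -(V : ℤ) ≤ -(v : ℤ) := by
      simp only [neg_le_neg_iff, Nat.cast_le]
      exact hv
    calc ∑ n ∈ Finset.Ico (-(v : ℤ)) 0, c n * π ^ n
        = ∑ n ∈ Finset.Ico (-(v : ℤ)) 0, (if -(v : ℤ) ≤ n then c n else 0) * π ^ n :=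
          Finset.sum_congr rfl (fun n hn => by rw [if_pos (Finset.mem_Ico.1 hn).1])
      _ = ∑ n ∈ Finset.Ico (-(V : ℤ)) 0, (if -(v : ℤ) ≤ n then c n else 0) * π ^ n := by
          apply Finset.sum_subset (Finset.Ico_subset_Ico hvV le_rfl)
          intro n hn hn'
          have h1 := Finset.mem_Ico.1 hn
          have h2 : ¬ (-(v : ℤ) ≤ n) := fun hc => hn' (Finset.mem_Ico.2 ⟨hc, h1.2⟩)
          rw [if_neg h2, zero_mul]
  have hsum₁ : y₁ = ∑ n ∈ Finset.Ico (-(V : ℤ)) 0, d₁ n * π ^ n := by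
    rw [hy₁, hsum v₁ c₁ (le_max_left _ _)]
  have hsum₂ : y₂ = ∑ n ∈ Finset.Ico (-(V : ℤ)) 0, d₂ n * π ^ n := by
    rw [hy₂, hsum v₂ c₂ (le_max_right _ _)]
  by_contra hne
  set S : Finset ℤ := (Finset.Ico (-(V : ℤ)) 0).filter (fun n => d₁ n ≠ d₂ n) with hSdef
  have hS : S.Nonempty := by
    by_contra hS
    apply hne
    rw [hsum₁, hsum₂]
    apply Finset.sum_congr rfl
    intro n hn
    have : d₁ n = d₂ n := by
      by_contra hd
      exact hS ⟨n, Finset.mem_filter.2 ⟨hn, hd⟩⟩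
    rw [this]
  set n₀ : ℤ := S.min' hS with hn₀def
  have hn₀S : n₀ ∈ S := S.min'_mem hS
  have hn₀Ico : n₀ ∈ Finset.Ico (-(V : ℤ)) 0 := (Finset.mem_filter.1 hn₀S).1
  have hn₀ne : d₁ n₀ ≠ d₂ n₀ := (Finset.mem_filter.1 hn₀S).2
  have hn₀neg : n₀ < 0 := (Finset.mem_Ico.1 hn₀Ico).2
  -- the difference
  have hdiff : y₁ - y₂ = (d₁ n₀ - d₂ n₀) * π ^ n₀
      + ∑ n ∈ (Finset.Ico (-(V : ℤ)) 0).erase n₀, (d₁ n - d₂ n) * π ^ n := by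
    have e1 : y₁ - y₂ = ∑ n ∈ Finset.Ico (-(V : ℤ)) 0, (d₁ n - d₂ n) * π ^ n := by
      rw [hsum₁, hsum₂, ← Finset.sum_sub_distrib]
      exact Finset.sum_congr rfl (fun n _ => by ring)
    rw [e1, ← Finset.add_sum_erase _ (fun n => (d₁ n - d₂ n) * π ^ n) hn₀Ico]
  have hCdiff : ∀ x ∈ C, ∀ y ∈ C, ‖x - y‖ ≤ 1 := by
    intro x hx y hy
    rw [sub_eq_add_neg]
    refine le_trans (IsUltrametricDist.norm_add_le_max _ _) ?_
    rw [norm_neg]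
    exact max_le (hCO x hx) (hCO y hy)
  have hπn : ∀ n : ℤ, ‖π ^ n‖ = (q : ℝ) ^ (-n) := by
    intro n
    rw [norm_zpow, hπ, ← zpow_neg_one, ← zpow_mul]
    ring_nf
  -- tail bound
  have htail : ‖∑ n ∈ (Finset.Ico (-(V : ℤ)) 0).erase n₀, (d₁ n - d₂ n) * π ^ n‖
      ≤ (q : ℝ) ^ (-(n₀ + 1)) := by
    apply IsUltrametricDist.norm_sum_le_of_forall_le_of_nonneg
    · positivity
    · intro n hn
      by_cases hd : d₁ n = d₂ n
      · simp only [hd, sub_self, zero_mul, norm_zero]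
        positivity
      · have hnS : n ∈ S := Finset.mem_filter.2 ⟨Finset.mem_of_mem_erase hn, hd⟩
        have hn1 : n₀ + 1 ≤ n := by
          have := S.min'_le n hnS
          have := Finset.ne_of_mem_erase hn
          omega
        rw [norm_mul, hπn]
        calc ‖d₁ n - d₂ n‖ * (q : ℝ) ^ (-n) ≤ 1 * (q : ℝ) ^ (-n) := by
              apply mul_le_mul_of_nonneg_right (hCdiff _ (hd₁C n) _ (hd₂C n)) (by positivity)
          _ ≤ (q : ℝ) ^ (-(n₀ + 1)) := by
              rw [one_mul]
              exact zpow_le_zpow_right₀ hq1.le (by omega)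
  -- head norm
  have hhead : ‖(d₁ n₀ - d₂ n₀) * π ^ n₀‖ = (q : ℝ) ^ (-n₀) := by
    rw [norm_mul, hπn]
    have h1 : ‖d₁ n₀ - d₂ n₀‖ = 1 := by
      rcases lt_or_ge ‖d₁ n₀ - d₂ n₀‖ 1 with hlt | hge
      · exfalso
        obtain ⟨c, -, hcu⟩ := hCrep (d₁ n₀) (hCO _ (hd₁C n₀))
        have e1 : d₁ n₀ = c := hcu _ ⟨hd₁C n₀, by simp⟩
        have e2 : d₂ n₀ = c := hcu _ ⟨hd₂C n₀, hlt⟩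
        exact hn₀ne (e1.trans e2.symm)
      · exact le_antisymm (hCdiff _ (hd₁C n₀) _ (hd₂C n₀)) hge
    rw [h1, one_mul]
  have hlt : (q : ℝ) ^ (-(n₀ + 1)) < (q : ℝ) ^ (-n₀) :=
    zpow_lt_zpow_right₀ hq1 (by omega)
  have hnorm : ‖y₁ - y₂‖ = (q : ℝ) ^ (-n₀) := by
    rw [hdiff, IsUltrametricDist.norm_add_eq_max_of_norm_ne_norm, hhead]
    · exact max_eq_left (le_of_lt (lt_of_le_of_lt htail (hhead ▸ hhead ▸ hlt)))
    · rw [hhead]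
      exact ne_of_gt (lt_of_le_of_lt htail hlt)
  have : (1 : ℝ) < (q : ℝ) ^ (-n₀) := by
    calc (1:ℝ) < (q:ℝ) := hq1
    _ = (q:ℝ) ^ (1:ℤ) := (zpow_one _).symm
    _ ≤ (q:ℝ) ^ (-n₀) := zpow_le_zpow_right₀ hq1.le (by omega)
  rw [hnorm] at h
  linarith

/-- A compact closed ball in an ultrametric space can be partitioned into finitely many
closed balls of any smaller positive radius, with centers in the ball. -/
lemma exists_closedBall_partition {F : Type*} [MetricSpace F] [IsUltrametricDist F]
    (x₁ : F) {r s : ℝ} (hs : 0 < s) (hsr : s ≤ r)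
    (hcomp : IsCompact (closedBall x₁ r)) :
    ∃ 𝒞 : Finset (Set F),
      (∀ B ∈ 𝒞, ∃ t ∈ closedBall x₁ r, B = closedBall t s) ∧
      ((↑𝒞 : Set (Set F)).Pairwise Disjoint) ∧
      ⋃₀ (↑𝒞 : Set (Set F)) = closedBall x₁ r := by
  have hcover : closedBall x₁ r ⊆ ⋃ t : F, closedBall t s := by
    intro x _
    exact Set.mem_iUnion.2 ⟨x, mem_closedBall_self hs.le⟩
  obtain ⟨T, hT⟩ := hcomp.elim_finite_subcover (fun t : F => closedBall t s)
    (fun t => IsUltrametricDist.isOpen_closedBall t hs.ne') hcover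
  refine ⟨(T.filter (fun t => (closedBall t s ∩ closedBall x₁ r).Nonempty)).image
    (fun t => closedBall t s), ?_, ?_, ?_⟩
  · intro B hB
    obtain ⟨t, ht, rfl⟩ := Finset.mem_image.1 hB
    obtain ⟨y, hy1, hy2⟩ := (Finset.mem_filter.1 ht).2
    exact ⟨y, hy2, IsUltrametricDist.closedBall_eq_of_mem hy1⟩
  · intro B hB B' hB' hne
    obtain ⟨t, -, rfl⟩ := Finset.mem_image.1 hB
    obtain ⟨t', -, rfl⟩ := Finset.mem_image.1 hB'
    rcases IsUltrametricDist.closedBall_eq_or_disjoint t t' s with h | h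
    · exact absurd h hne
    · exact h
  · apply Set.Subset.antisymm
    · intro x hx
      obtain ⟨B, hB, hxB⟩ := hx
      obtain ⟨t, ht, rfl⟩ := Finset.mem_image.1 hB
      obtain ⟨y, hy1, hy2⟩ := (Finset.mem_filter.1 ht).2
      rw [IsUltrametricDist.closedBall_eq_of_mem hy1] at hxB
      -- x ∈ closedBall y s, y ∈ closedBall x₁ r, s ≤ r
      rw [mem_closedBall] at *
      calc dist x x₁ ≤ max (dist x y) (dist y x₁) := IsUltrametricDist.dist_triangle_max x y x₁
        _ ≤ r := max_le (le_trans hxB hsr) hy2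
    · intro x hx
      obtain ⟨t, ht⟩ := Set.mem_iUnion.1 (hT hx)
      obtain ⟨htT, hxt⟩ := Set.mem_iUnion.1 ht
      refine Set.mem_sUnion.2 ⟨closedBall t s, ?_, hxt⟩
      refine Finset.mem_coe.2 (Finset.mem_image.2 ⟨t, Finset.mem_filter.2 ⟨htT, ⟨x, hxt, hx⟩⟩, rfl⟩)

/-- **Lemma 3.2** (non-correlation): let `f, g : O → F` be scaling maps of scaling
ratios `q^{λ_f}` and `q^{λ_g}` with `λ_f > λ_g ≥ 0`, `f̃(x) := [f(x)]`, `g̃(x) := [g(x)]`,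
and let `D ⊆ O` be a ball of radius `q^{-γ}` with `0 ≤ γ ≤ λ_f - λ_g`.  Then
`μ(f̃⁻¹(D) ∩ g̃⁻¹(D)) = μ(D)²`. -/
theorem haar_noncorrelation_intPart_scaling
    {F : Type*} [NormedField F] [CompleteSpace F] [LocallyCompactSpace F]
    (hna : ∀ x y : F, ‖x + y‖ ≤ max ‖x‖ ‖y‖)
    (q : ℕ) (hq : 1 < q)
    (π : F) (hπ : ‖π‖ = (q : ℝ)⁻¹)
    (hrange : ∀ x : F, x ≠ 0 → ∃ j : ℤ, ‖x‖ = (q : ℝ) ^ j)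
    (C : Set F) (hC0 : (0 : F) ∈ C) (hCO : ∀ c ∈ C, ‖c‖ ≤ 1)
    (hCrep : ∀ x : F, ‖x‖ ≤ 1 → ∃! c, c ∈ C ∧ ‖x - c‖ < 1)
    (intPart : F → F)
    (hint_mem : ∀ x, ‖intPart x‖ ≤ 1)
    (hint_frac : ∀ x, IsFracSum C π (x - intPart x))
    [MeasurableSpace F] [BorelSpace F]
    -- `μ` is the Haar probability measure of the compact additive group `O = {x : ‖x‖ ≤ 1}`
    (μ : Measure F) [IsProbabilityMeasure μ]
    (hμ_supp : μ {x : F | ‖x‖ ≤ 1}ᶜ = 0)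
    (hμ_inv : ∀ a : F, ‖a‖ ≤ 1 → μ.map (fun z => a + z) = μ)
    (f g : F → F) (lamf lamg : ℤ) (hlam : lamf > lamg) (hlamg : 0 ≤ lamg)
    (hscalf : ∀ x y : F, ‖x‖ ≤ 1 → ‖y‖ ≤ 1 → ‖f x - f y‖ = (q : ℝ) ^ lamf * ‖x - y‖)
    (hscalg : ∀ x y : F, ‖x‖ ≤ 1 → ‖y‖ ≤ 1 → ‖g x - g y‖ = (q : ℝ) ^ lamg * ‖x - y‖)
    (γ : ℤ) (hγ0 : 0 ≤ γ) (hγ : γ ≤ lamf - lamg)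
    (a : F) (ha : ‖a‖ ≤ 1) (D : Set F) (hD : D = {y : F | ‖y - a‖ ≤ (q : ℝ) ^ (-γ)}) :
    μ ((fun x => intPart (f x)) ⁻¹' D ∩ (fun x => intPart (g x)) ⁻¹' D ∩
        {x : F | ‖x‖ ≤ 1}) = μ D ^ 2 := by
  haveI hud : IsUltrametricDist F :=
    IsUltrametricDist.isUltrametricDist_of_forall_norm_add_le_max_norm hna
  have hq1 : (1 : ℝ) < (q : ℝ) := by exact_mod_cast hq
  have hq0 : (q : ℝ) ≠ 0 := by positivity
  letI : NontriviallyNormedField F :=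
    { ‹NormedField F› with
      non_trivial := ⟨π⁻¹, by rw [norm_inv, hπ, inv_inv]; exact hq1⟩ }
  haveI : ProperSpace F :=
    ProperSpace.of_nontriviallyNormedField_of_weaklyLocallyCompactSpace F
  have hcompact : IsCompact (closedBall (0 : F) 1) := isCompact_closedBall _ _
  -- basic norm facts
  have hzpos : ∀ k : ℤ, (0 : ℝ) < (q : ℝ) ^ k := fun k => zpow_pos (by positivity) k
  have hzle1 : ∀ k : ℤ, 0 ≤ k → (q : ℝ) ^ (-k) ≤ 1 := by
    intro k hk
    calc (q : ℝ) ^ (-k) ≤ (q : ℝ) ^ (0 : ℤ) := zpow_le_zpow_right₀ hq1.le (by omega)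
      _ = 1 := zpow_zero _
  have hmaxsub : ∀ x y : F, ‖x - y‖ ≤ max ‖x‖ ‖y‖ := by
    intro x y
    calc ‖x - y‖ = ‖x + -y‖ := by rw [sub_eq_add_neg]
      _ ≤ max ‖x‖ ‖-y‖ := hna _ _
      _ = max ‖x‖ ‖y‖ := by rw [norm_neg]
  have hπpow : ∀ k : ℤ, ‖π ^ k‖ = (q : ℝ) ^ (-k) := by
    intro k
    rw [norm_zpow, hπ, ← zpow_neg_one, ← zpow_mul]
    ring_nf
  have hOc : {x : F | ‖x‖ ≤ 1} = closedBall (0 : F) 1 := by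
    ext x; simp [mem_closedBall, dist_zero_right]
  have hOmeas : MeasurableSet {x : F | ‖x‖ ≤ 1} := hOc ▸ measurableSet_closedBall
  have hμO : μ (closedBall (0 : F) 1) = 1 := by
    rw [← hOc]
    refine le_antisymm prob_le_one ?_
    calc (1 : ℝ≥0∞) = μ Set.univ := measure_univ.symm
      _ = μ ({x : F | ‖x‖ ≤ 1} ∪ {x : F | ‖x‖ ≤ 1}ᶜ) := by rw [Set.union_compl_self]
      _ ≤ μ {x : F | ‖x‖ ≤ 1} + μ {x : F | ‖x‖ ≤ 1}ᶜ := measure_union_le _ _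
      _ = μ {x : F | ‖x‖ ≤ 1} := by rw [hμ_supp, add_zero]
  -- translation invariance of balls
  have htrans : ∀ t : F, ‖t‖ ≤ 1 → ∀ S : Set F, MeasurableSet S →
      μ ((fun x => t + x) ⁻¹' S) = μ S := by
    intro t ht S hS
    conv_rhs => rw [← hμ_inv t ht]
    rw [Measure.map_apply (measurable_const_add t) hS]
  have hball_t : ∀ t : F, ‖t‖ ≤ 1 → ∀ R : ℝ,
      μ (closedBall t R) = μ (closedBall (0 : F) R) := by
    intro t ht R
    have heq : closedBall t R = (fun x => (-t) + x) ⁻¹' (closedBall (0 : F) R) := by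
      ext x
      rw [Set.mem_preimage, mem_closedBall, mem_closedBall, dist_eq_norm, dist_eq_norm,
        sub_zero, neg_add_eq_sub]
    rw [heq, htrans (-t) (by rwa [norm_neg]) _ measurableSet_closedBall]
  set β : ℤ → ℝ≥0∞ := fun k => μ (closedBall (0 : F) ((q : ℝ) ^ (-k))) with hβ
  -- ultrametric ball inclusion
  have hsub : ∀ (x t : F) (r s : ℝ), t ∈ closedBall x r → s ≤ r →
      closedBall t s ⊆ closedBall x r := by
    intro x t r s ht hsr
    rw [IsUltrametricDist.closedBall_eq_of_mem ht]
    exact closedBall_subset_closedBall hsr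
  -- sum over a finite disjoint family
  have hsUnion : ∀ 𝒞 : Finset (Set F), (∀ B ∈ 𝒞, MeasurableSet B) →
      ((↑𝒞 : Set (Set F)).Pairwise Disjoint) → μ (⋃₀ (↑𝒞 : Set (Set F))) = ∑ B ∈ 𝒞, μ B := by
    intro 𝒞 hm hd
    rw [Set.sUnion_eq_biUnion]
    exact measure_biUnion_finset hd hm
  -- intPart facts
  have huniq : ∀ z w : F, ‖w‖ ≤ 1 → IsFracSum C π (z - w) → intPart z = w := by
    intro z w hw hfr
    have h1 := hint_frac z
    have hb : ‖(z - intPart z) - (z - w)‖ ≤ 1 := by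
      have he : (z - intPart z) - (z - w) = w - intPart z := by ring
      rw [he]
      exact le_trans (hmaxsub _ _) (max_le hw (hint_mem z))
    have heq : z - intPart z = z - w :=
      fracSum_eq_of_norm_le_one q hq π hπ C hC0 hCO hCrep h1 hfr hb
    linear_combination -heq
  have hshift : ∀ z z' : F, ‖z - z'‖ ≤ 1 → intPart z = intPart z' + (z - z') := by
    intro z z' hzz
    apply huniq
    · calc ‖intPart z' + (z - z')‖ ≤ max ‖intPart z'‖ ‖z - z'‖ := hna _ _
        _ ≤ 1 := max_le (hint_mem z') hzz
    · have he : z - (intPart z' + (z - z')) = z' - intPart z' := by ring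
      rw [he]
      exact hint_frac z'
  -- surjectivity of scaling maps onto balls
  have hsurj : ∀ (h : F → F) (lam : ℤ), 0 ≤ lam →
      (∀ x y : F, ‖x‖ ≤ 1 → ‖y‖ ≤ 1 → ‖h x - h y‖ = (q : ℝ) ^ lam * ‖x - y‖) →
      ∀ t : F, ‖t‖ ≤ 1 → ∀ z : F, ‖z - h t‖ ≤ 1 →
      ∃ x : F, ‖x - t‖ ≤ (q : ℝ) ^ (-lam) ∧ ‖x‖ ≤ 1 ∧ h x = z := by
    intro h lam hlam hscal t ht z hz
    set e : F → F := fun u => h (t + π ^ lam * u) - h t with he_def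
    have hmem : ∀ u : F, u ∈ closedBall (0 : F) 1 → ‖t + π ^ lam * u‖ ≤ 1 := by
      intro u hu
      rw [mem_closedBall, dist_zero_right] at hu
      refine le_trans (hna t _) (max_le ht ?_)
      rw [norm_mul, hπpow]
      calc (q : ℝ) ^ (-lam) * ‖u‖ ≤ 1 * 1 :=
            mul_le_mul (hzle1 lam hlam) hu (norm_nonneg u) zero_le_one
        _ = 1 := one_mul 1
    have hisom : ∀ u ∈ closedBall (0 : F) 1, ∀ v ∈ closedBall (0 : F) 1,
        dist (e u) (e v) = dist u v := by
      intro u hu v hv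
      rw [dist_eq_norm, dist_eq_norm]
      have h1 : e u - e v = h (t + π ^ lam * u) - h (t + π ^ lam * v) := by
        rw [he_def]; ring
      rw [h1, hscal _ _ (hmem u hu) (hmem v hv)]
      have h2 : (t + π ^ lam * u) - (t + π ^ lam * v) = π ^ lam * (u - v) := by ring
      rw [h2, norm_mul, hπpow, ← mul_assoc, ← zpow_add₀ hq0, add_neg_cancel, zpow_zero, one_mul]
    have hmapsto : Set.MapsTo e (closedBall (0 : F) 1) (closedBall (0 : F) 1) := by
      intro u hu
      rw [mem_closedBall, dist_zero_right]
      have h0 : (0 : F) ∈ closedBall (0 : F) 1 := mem_closedBall_self zero_le_one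
      have h1 : ‖e u - e 0‖ = ‖u - 0‖ := by
        rw [← dist_eq_norm, ← dist_eq_norm]; exact hisom u hu 0 h0
      have he0 : e 0 = 0 := by rw [he_def]; simp
      rw [he0, sub_zero, sub_zero] at h1
      rw [h1]
      rwa [mem_closedBall, dist_zero_right] at hu
    have hzm : z - h t ∈ closedBall (0 : F) 1 := by
      rwa [mem_closedBall, dist_zero_right]
    obtain ⟨u, hu, hue⟩ := comp_isom_surjOn hcompact hisom hmapsto hzm
    have huO : ‖u‖ ≤ 1 := by rwa [mem_closedBall, dist_zero_right] at hu
    refine ⟨t + π ^ lam * u, ?_, hmem u hu, ?_⟩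
    · have h3 : (t + π ^ lam * u) - t = π ^ lam * u := by ring
      rw [h3, norm_mul, hπpow]
      calc (q : ℝ) ^ (-lam) * ‖u‖ ≤ (q : ℝ) ^ (-lam) * 1 :=
            mul_le_mul_of_nonneg_left huO (hzpos (-lam)).le
        _ = (q : ℝ) ^ (-lam) := mul_one _
    · have h4 : h (t + π ^ lam * u) - h t = z - h t := hue
      linear_combination h4
  -- the key ball analysis for a scaling map
  have key : ∀ (h : F → F) (lam : ℤ), 0 ≤ lam →
      (∀ x y : F, ‖x‖ ≤ 1 → ‖y‖ ≤ 1 → ‖h x - h y‖ = (q : ℝ) ^ lam * ‖x - y‖) →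
      ∀ t : F, ‖t‖ ≤ 1 →
      ∃ x₁ ∈ closedBall t ((q : ℝ) ^ (-lam)),
        (fun x => intPart (h x)) ⁻¹' D ∩ closedBall t ((q : ℝ) ^ (-lam))
          = closedBall x₁ ((q : ℝ) ^ (-(lam + γ))) := by
    intro h lam hlam hscal t ht
    set y₀ : F := h t - intPart (h t) with hy₀
    have hy₀frac : IsFracSum C π y₀ := hint_frac (h t)
    have htarget : ‖(y₀ + a) - h t‖ ≤ 1 := by
      have he : (y₀ + a) - h t = a - intPart (h t) := by rw [hy₀]; ring
      rw [he]
      exact le_trans (hmaxsub _ _) (max_le ha (hint_mem _))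
    obtain ⟨x₁, hx₁t, hx₁O, hx₁⟩ := hsurj h lam hlam hscal t ht (y₀ + a) htarget
    have hx₁mem : x₁ ∈ closedBall t ((q : ℝ) ^ (-lam)) := by
      rw [mem_closedBall, dist_eq_norm]; exact hx₁t
    have hintx₁ : intPart (h x₁) = a := by
      apply huniq _ _ ha
      have he : h x₁ - a = y₀ := by rw [hx₁]; ring
      rw [he]; exact hy₀frac
    refine ⟨x₁, hx₁mem, ?_⟩
    have hfacts : ∀ x : F, x ∈ closedBall t ((q : ℝ) ^ (-lam)) →
        ‖x‖ ≤ 1 ∧ intPart (h x) - a = h x - h x₁ := by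
      intro x hx
      have hxO : ‖x‖ ≤ 1 := by
        have := hsub 0 t 1 ((q : ℝ) ^ (-lam)) (by
          rw [mem_closedBall, dist_zero_right]; exact ht) (hzle1 lam hlam) hx
        rwa [mem_closedBall, dist_zero_right] at this
      have hxx₁ : ‖x - x₁‖ ≤ (q : ℝ) ^ (-lam) := by
        rw [mem_closedBall, dist_eq_norm] at hx
        have he : x - x₁ = (x - t) - (x₁ - t) := by ring
        rw [he]
        exact le_trans (hmaxsub _ _) (max_le hx hx₁t)
      have hh1 : ‖h x - h x₁‖ ≤ 1 := by
        rw [hscal x x₁ hxO hx₁O]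
        calc (q : ℝ) ^ lam * ‖x - x₁‖ ≤ (q : ℝ) ^ lam * (q : ℝ) ^ (-lam) :=
              mul_le_mul_of_nonneg_left hxx₁ (hzpos lam).le
          _ = 1 := by rw [← zpow_add₀ hq0, add_neg_cancel, zpow_zero]
      refine ⟨hxO, ?_⟩
      rw [hshift (h x) (h x₁) hh1, hintx₁]
      ring
    ext x
    simp only [Set.mem_inter_iff, Set.mem_preimage, mem_closedBall, dist_eq_norm, hD,
      Set.mem_setOf_eq]
    constructor
    · rintro ⟨hxD, hxP⟩
      obtain ⟨hxO, hptr⟩ := hfacts x (by rw [mem_closedBall, dist_eq_norm]; exact hxP)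
      rw [hptr] at hxD
      rw [hscal x x₁ hxO hx₁O] at hxD
      -- q^lam * ‖x - x₁‖ ≤ q^(-γ)  ⇒  ‖x - x₁‖ ≤ q^(-(lam+γ))
      calc ‖x - x₁‖ = (q : ℝ) ^ (-lam) * ((q : ℝ) ^ lam * ‖x - x₁‖) := by
            rw [← mul_assoc, ← zpow_add₀ hq0, neg_add_cancel, zpow_zero, one_mul]
        _ ≤ (q : ℝ) ^ (-lam) * (q : ℝ) ^ (-γ) :=
            mul_le_mul_of_nonneg_left hxD (hzpos (-lam)).le
        _ = (q : ℝ) ^ (-(lam + γ)) := by rw [← zpow_add₀ hq0]; ring_nf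
    · intro hx
      have hxP : ‖x - t‖ ≤ (q : ℝ) ^ (-lam) := by
        have he : x - t = (x - x₁) + (x₁ - t) := by ring
        rw [he]
        refine le_trans (hna _ _) (max_le (le_trans hx ?_) hx₁t)
        exact zpow_le_zpow_right₀ hq1.le (by omega)
      obtain ⟨hxO, hptr⟩ := hfacts x (by rw [mem_closedBall, dist_eq_norm]; exact hxP)
      refine ⟨?_, hxP⟩
      rw [hptr, hscal x x₁ hxO hx₁O]
      calc (q : ℝ) ^ lam * ‖x - x₁‖ ≤ (q : ℝ) ^ lam * (q : ℝ) ^ (-(lam + γ)) :=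
            mul_le_mul_of_nonneg_left hx (hzpos lam).le
        _ = (q : ℝ) ^ (-γ) := by rw [← zpow_add₀ hq0]; ring_nf
  -- multiplicativity of ball measures
  have hβadd : ∀ j k : ℤ, 0 ≤ j → 0 ≤ k → β (j + k) = β j * β k := by
    intro j k hj hk
    obtain ⟨𝒞, hball, hdisj, hunion⟩ := exists_closedBall_partition (0 : F)
      (hzpos (-k)) (hzle1 k hk) hcompact
    have hBmeas : ∀ B ∈ 𝒞, MeasurableSet B := by
      intro B hB
      obtain ⟨t, -, rfl⟩ := hball B hB
      exact measurableSet_closedBall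
    have hBmeasure : ∀ B ∈ 𝒞, μ B = β k := by
      intro B hB
      obtain ⟨t, ht, rfl⟩ := hball B hB
      rw [mem_closedBall, dist_zero_right] at ht
      exact hball_t t ht _
    have h1 : (𝒞.card : ℝ≥0∞) * β k = 1 := by
      have := hsUnion 𝒞 hBmeas hdisj
      rw [hunion, hμO] at this
      rw [this, Finset.sum_congr rfl hBmeasure, Finset.sum_const, nsmul_eq_mul]
    -- scale the partition by π ^ j
    have hπjne : π ^ j ≠ 0 := by
      rw [← norm_ne_zero_iff, hπpow]
      exact (hzpos (-j)).ne'
    set σ : Set F → Set F := fun B => (fun x => π ^ j * x) '' B with hσ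
    have himg : ∀ (t : F) (s : ℝ), σ (closedBall t s)
        = closedBall (π ^ j * t) ((q : ℝ) ^ (-j) * s) := by
      intro t s
      ext z
      simp only [hσ, Set.mem_image, mem_closedBall, dist_eq_norm]
      constructor
      · rintro ⟨x, hx, rfl⟩
        rw [show π ^ j * x - π ^ j * t = π ^ j * (x - t) by ring, norm_mul, hπpow]
        exact mul_le_mul_of_nonneg_left hx (hzpos (-j)).le
      · intro hz
        refine ⟨(π ^ j)⁻¹ * z, ?_, by field_simp⟩
        rw [show (π ^ j)⁻¹ * z - t = (π ^ j)⁻¹ * (z - π ^ j * t) by field_simp,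
          norm_mul, norm_inv, hπpow]
        calc ((q : ℝ) ^ (-j))⁻¹ * ‖z - π ^ j * t‖
            ≤ ((q : ℝ) ^ (-j))⁻¹ * ((q : ℝ) ^ (-j) * s) :=
              mul_le_mul_of_nonneg_left hz (by positivity)
          _ = s := by field_simp
    set 𝒞' : Finset (Set F) := 𝒞.image σ with h𝒞'
    have hcard : 𝒞'.card = 𝒞.card :=
      Finset.card_image_of_injective _ (Set.image_injective.2 (mul_right_injective₀ hπjne))
    have hball' : ∀ B' ∈ 𝒞', ∃ t', ‖t'‖ ≤ 1 ∧ B' = closedBall t' ((q : ℝ) ^ (-(j + k))) := by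
      intro B' hB'
      obtain ⟨B, hB, rfl⟩ := Finset.mem_image.1 hB'
      obtain ⟨t, ht, rfl⟩ := hball B hB
      rw [mem_closedBall, dist_zero_right] at ht
      refine ⟨π ^ j * t, ?_, ?_⟩
      · rw [norm_mul, hπpow]
        calc (q : ℝ) ^ (-j) * ‖t‖ ≤ 1 * 1 :=
              mul_le_mul (hzle1 j hj) ht (norm_nonneg t) zero_le_one
          _ = 1 := one_mul 1
      · rw [himg, ← zpow_add₀ hq0]
        ring_nf
    have hmeas' : ∀ B' ∈ 𝒞', MeasurableSet B' := by
      intro B' hB'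
      obtain ⟨t', -, rfl⟩ := hball' B' hB'
      exact measurableSet_closedBall
    have hmeasure' : ∀ B' ∈ 𝒞', μ B' = β (j + k) := by
      intro B' hB'
      obtain ⟨t', ht', rfl⟩ := hball' B' hB'
      exact hball_t t' ht' _
    have hdisj' : ((↑𝒞' : Set (Set F)).Pairwise Disjoint) := by
      intro B₁ hB₁ B₂ hB₂ hne
      obtain ⟨t₁, -, rfl⟩ := hball' B₁ hB₁
      obtain ⟨t₂, -, rfl⟩ := hball' B₂ hB₂
      rcases IsUltrametricDist.closedBall_eq_or_disjoint t₁ t₂ ((q : ℝ) ^ (-(j + k))) with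
        hcase | hcase
      · exact absurd hcase hne
      · exact hcase
    have hunion' : ⋃₀ (↑𝒞' : Set (Set F)) = closedBall (0 : F) ((q : ℝ) ^ (-j)) := by
      rw [h𝒞', Finset.coe_image, Set.sUnion_image]
      have himg2 : ⋃ B ∈ (↑𝒞 : Set (Set F)), σ B = σ (⋃₀ (↑𝒞 : Set (Set F))) := by
        simp only [hσ, Set.sUnion_eq_biUnion, Set.image_iUnion]
      rw [himg2, hunion, himg, mul_zero, mul_one]
    have h2 : β j = (𝒞.card : ℝ≥0∞) * β (j + k) := by
      have hthis := hsUnion 𝒞' hmeas' hdisj'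
      rw [hunion'] at hthis
      have h3 : β j = ∑ B ∈ 𝒞', μ B := hthis
      rw [h3, Finset.sum_congr rfl hmeasure', Finset.sum_const, nsmul_eq_mul, hcard]
    calc β (j + k) = β (j + k) * ((𝒞.card : ℝ≥0∞) * β k) := by rw [h1, mul_one]
      _ = ((𝒞.card : ℝ≥0∞) * β (j + k)) * β k := by ring
      _ = β j * β k := by rw [← h2]
  -- notation for the three sets
  set A : Set F := (fun x => intPart (f x)) ⁻¹' D with hA
  set G : Set F := (fun x => intPart (g x)) ⁻¹' D with hG
  set M : Set F := A ∩ G ∩ {x : F | ‖x‖ ≤ 1} with hM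
  -- outer partition of O into balls of radius q^(-lamg)
  obtain ⟨𝒜, hPball, hPdisj, hPunion⟩ := exists_closedBall_partition (0 : F)
    (hzpos (-lamg)) (hzle1 lamg hlamg) hcompact
  have hPfacts : ∀ P ∈ 𝒜, MeasurableSet (M ∩ P) ∧ μ (M ∩ P) = β lamg * (β γ * β γ) := by
    intro P hP
    obtain ⟨tP, htPmem, rfl⟩ := hPball P hP
    have htP : ‖tP‖ ≤ 1 := by rwa [mem_closedBall, dist_zero_right] at htPmem
    obtain ⟨x₁, hx₁mem, hx₁eq⟩ := key g lamg hlamg hscalg tP htP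
    have hPO : closedBall tP ((q : ℝ) ^ (-lamg)) ⊆ closedBall (0 : F) 1 :=
      hsub 0 tP 1 _ htPmem (hzle1 lamg hlamg)
    have hx₁O : ‖x₁‖ ≤ 1 := by
      have := hPO hx₁mem
      rwa [mem_closedBall, dist_zero_right] at this
    have hrs : (q : ℝ) ^ (-lamf) ≤ (q : ℝ) ^ (-(lamg + γ)) :=
      zpow_le_zpow_right₀ hq1.le (by omega)
    obtain ⟨𝒬, hQball, hQdisj, hQunion⟩ := exists_closedBall_partition x₁
      (hzpos (-lamf)) hrs (isCompact_closedBall _ _)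
    have hQO : ∀ Q ∈ 𝒬, ∃ tQ, ‖tQ‖ ≤ 1 ∧ Q = closedBall tQ ((q : ℝ) ^ (-lamf)) := by
      intro Q hQ
      obtain ⟨tQ, htQ, rfl⟩ := hQball Q hQ
      refine ⟨tQ, ?_, rfl⟩
      have h1 := hsub 0 x₁ 1 _ (by rw [mem_closedBall, dist_zero_right]; exact hx₁O)
        (hzle1 (lamg + γ) (by omega)) htQ
      rwa [mem_closedBall, dist_zero_right] at h1
    have hQfacts : ∀ Q ∈ 𝒬, ∃ x₂, ‖x₂‖ ≤ 1 ∧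
        A ∩ Q = closedBall x₂ ((q : ℝ) ^ (-(lamf + γ))) := by
      intro Q hQ
      obtain ⟨tQ, htQO, rfl⟩ := hQO Q hQ
      obtain ⟨x₂, hx₂mem, hx₂eq⟩ := key f lamf (by omega) hscalf tQ htQO
      refine ⟨x₂, ?_, hx₂eq⟩
      have h2 := hsub 0 tQ 1 _ (by rw [mem_closedBall, dist_zero_right]; exact htQO)
        (hzle1 lamf (by omega)) hx₂mem
      rwa [mem_closedBall, dist_zero_right] at h2
    have hMP : M ∩ closedBall tP ((q : ℝ) ^ (-lamg)) = ⋃ Q ∈ 𝒬, (A ∩ Q) := by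
      have e1 : M ∩ closedBall tP ((q : ℝ) ^ (-lamg))
          = A ∩ (G ∩ closedBall tP ((q : ℝ) ^ (-lamg))) := by
        ext x
        simp only [hM, Set.mem_inter_iff, Set.mem_setOf_eq]
        constructor
        · rintro ⟨⟨⟨hA', hG'⟩, -⟩, hP'⟩
          exact ⟨hA', hG', hP'⟩
        · rintro ⟨hA', hG', hP'⟩
          have hxO : ‖x‖ ≤ 1 := by
            have := hPO hP'
            rwa [mem_closedBall, dist_zero_right] at this
          exact ⟨⟨⟨hA', hG'⟩, hxO⟩, hP'⟩
      rw [e1, hx₁eq, ← hQunion, Set.sUnion_eq_biUnion, Set.inter_iUnion₂]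
      exact Finset.set_biUnion_coe 𝒬 (fun Q => A ∩ Q)
    have hQmeas : ∀ Q ∈ 𝒬, MeasurableSet (A ∩ Q) := by
      intro Q hQ
      obtain ⟨x₂, -, he⟩ := hQfacts Q hQ
      rw [he]
      exact measurableSet_closedBall
    have hQdisj2 : (↑𝒬 : Set (Set F)).PairwiseDisjoint (fun Q => A ∩ Q) := by
      intro Q₁ h₁ Q₂ h₂ hne
      exact (hQdisj h₁ h₂ hne).mono Set.inter_subset_right Set.inter_subset_right
    constructor
    · rw [hMP]
      exact 𝒬.measurableSet_biUnion hQmeas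
    · rw [hMP, measure_biUnion_finset hQdisj2 hQmeas]
      have hsum1 : ∀ Q ∈ 𝒬, μ (A ∩ Q) = β (lamf + γ) := by
        intro Q hQ
        obtain ⟨x₂, hx₂O, he⟩ := hQfacts Q hQ
        rw [he]
        exact hball_t x₂ hx₂O _
      rw [Finset.sum_congr rfl hsum1, Finset.sum_const, nsmul_eq_mul]
      have hcardQ : (𝒬.card : ℝ≥0∞) * β lamf = β (lamg + γ) := by
        have h4 := hsUnion 𝒬 (fun Q hQ => by
          obtain ⟨tQ, -, rfl⟩ := hQO Q hQ
          exact measurableSet_closedBall) hQdisj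
        rw [hQunion] at h4
        have h5 : β (lamg + γ) = ∑ Q ∈ 𝒬, μ Q := by
          calc β (lamg + γ) = μ (closedBall x₁ ((q : ℝ) ^ (-(lamg + γ)))) :=
                (hball_t x₁ hx₁O _).symm
            _ = ∑ Q ∈ 𝒬, μ Q := h4
        have h6 : ∀ Q ∈ 𝒬, μ Q = β lamf := by
          intro Q hQ
          obtain ⟨tQ, htQO, rfl⟩ := hQO Q hQ
          exact hball_t tQ htQO _
        rw [h5, Finset.sum_congr rfl h6, Finset.sum_const, nsmul_eq_mul]
      calc (𝒬.card : ℝ≥0∞) * β (lamf + γ)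
          = (𝒬.card : ℝ≥0∞) * (β lamf * β γ) := by
            rw [hβadd lamf γ (by omega) hγ0]
        _ = ((𝒬.card : ℝ≥0∞) * β lamf) * β γ := by ring
        _ = β (lamg + γ) * β γ := by rw [hcardQ]
        _ = (β lamg * β γ) * β γ := by rw [hβadd lamg γ hlamg hγ0]
        _ = β lamg * (β γ * β γ) := by ring
  -- assemble
  have hMunion : M = ⋃ P ∈ 𝒜, (M ∩ P) := by
    ext x
    simp only [Set.mem_iUnion, Set.mem_inter_iff, exists_prop]
    constructor
    · intro hx
      have hxO : x ∈ closedBall (0 : F) 1 := by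
        rw [← hOc]
        exact hx.2
      rw [← hPunion] at hxO
      obtain ⟨P, hPmem, hxP⟩ := hxO
      exact ⟨P, hPmem, ⟨hx, hxP⟩⟩
    · rintro ⟨P, hPmem, hxM, -⟩
      exact hxM
  have hPdisj2 : (↑𝒜 : Set (Set F)).PairwiseDisjoint (fun P => M ∩ P) := by
    intro P₁ h₁ P₂ h₂ hne
    exact (hPdisj h₁ h₂ hne).mono Set.inter_subset_right Set.inter_subset_right
  have hμM : μ M = (𝒜.card : ℝ≥0∞) * (β lamg * (β γ * β γ)) := by
    conv_lhs => rw [hMunion]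
    rw [measure_biUnion_finset hPdisj2 (fun P hP => (hPfacts P hP).1)]
    rw [Finset.sum_congr rfl (fun P hP => (hPfacts P hP).2), Finset.sum_const, nsmul_eq_mul]
  have hcardP : (𝒜.card : ℝ≥0∞) * β lamg = 1 := by
    have h4 := hsUnion 𝒜 (fun P hP => by
      obtain ⟨tP, -, rfl⟩ := hPball P hP
      exact measurableSet_closedBall) hPdisj
    rw [hPunion, hμO] at h4
    have h6 : ∀ P ∈ 𝒜, μ P = β lamg := by
      intro P hP
      obtain ⟨tP, htPmem, rfl⟩ := hPball P hP
      exact hball_t tP (by rwa [mem_closedBall, dist_zero_right] at htPmem) _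
    rw [h4, Finset.sum_congr rfl h6, Finset.sum_const, nsmul_eq_mul]
  have hμD : μ D = β γ := by
    have hDball : D = closedBall a ((q : ℝ) ^ (-γ)) := by
      rw [hD]
      ext y
      simp [mem_closedBall, dist_eq_norm]
    rw [hDball]
    exact hball_t a ha _
  show μ M = μ D ^ 2
  rw [hμM, hμD, sq]
  calc (𝒜.card : ℝ≥0∞) * (β lamg * (β γ * β γ))
      = ((𝒜.card : ℝ≥0∞) * β lamg) * (β γ * β γ) := by ring
    _ = β γ * β γ := by rw [hcardP, one_mul]
end

section
/- Let F have characteristic 0, let p be its residue characteristic, and let e be the positive integer with ‖(p : F)‖ = q^{-e} (the ramification index). Let a, α ∈ F with a ≠ 0 and α ≠ 0, and let n ≥ 1 be an integer. Then for all x, y ∈ F with ‖x − a‖ ≤ ‖a‖·q^{-(e+1)} and ‖y − a‖ ≤ ‖a‖·q^{-(e+1)}: ‖α·x^n − α·y^n‖ = ‖α‖·‖(n : F)‖·‖a‖^{n−1}·‖x − y‖. -/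
open IsUltrametricDist Finset

section helpers
variable {F : Type*} [NormedField F] [IsUltrametricDist F]

lemma norm_coprime_eq_one' {p : ℕ} (hp : p.Prime) (hpF : ‖(p : F)‖ < 1)
    {m : ℕ} (hm : ¬ p ∣ m) : ‖(m : F)‖ = 1 := by
  have hco : Nat.Coprime p m := hp.coprime_iff_not_dvd.mpr hm
  have hb := Nat.gcd_eq_gcd_ab p m
  rw [hco] at hb
  have : ((1 : ℤ) : F) = (p : F) * ((Nat.gcdA p m : ℤ) : F) + (m : F) * ((Nat.gcdB p m : ℤ) : F) := by
    have h2 := congrArg (fun z : ℤ => (z : F)) hb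
    push_cast at h2 ⊢
    exact h2
  have h1 : (1 : ℝ) = ‖((1 : ℤ) : F)‖ := by simp
  have hle : (1:ℝ) ≤ max (‖(p : F)‖ * ‖((Nat.gcdA p m : ℤ) : F)‖)
      (‖(m : F)‖ * ‖((Nat.gcdB p m : ℤ) : F)‖) := by
    rw [h1, this]
    refine (norm_add_le_max _ _).trans ?_
    simp [norm_mul]
  have hA : ‖((Nat.gcdA p m : ℤ) : F)‖ ≤ 1 := norm_intCast_le_one F _
  have hB : ‖((Nat.gcdB p m : ℤ) : F)‖ ≤ 1 := norm_intCast_le_one F _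
  have hmle : ‖(m : F)‖ ≤ 1 := norm_natCast_le_one F m
  rcases le_max_iff.mp hle with h | h
  · nlinarith [norm_nonneg ((Nat.gcdA p m : ℤ) : F), norm_nonneg ((p:F))]
  · nlinarith [norm_nonneg ((Nat.gcdB p m : ℤ) : F), norm_nonneg ((m:F))]

lemma norm_eq_of_padic {p q e : ℕ} (hp : p.Prime) (hpF : ‖(p : F)‖ < 1)
    (hpe : ‖(p : F)‖ = (q : ℝ) ^ (-(e : ℤ))) {i : ℕ} (hi : i ≠ 0) :
    ‖(i : F)‖ = (q : ℝ) ^ (-((e : ℤ) * (i.factorization p))) := by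
  set v := i.factorization p with hv
  have hdecomp : i = p ^ v * (i / p ^ v) := (Nat.ordProj_mul_ordCompl_eq_self i p).symm
  have hnd : ¬ p ∣ (i / p ^ v) := Nat.not_dvd_ordCompl hp hi
  calc ‖(i : F)‖ = ‖((p ^ v * (i / p ^ v) : ℕ) : F)‖ := by rw [← hdecomp]
    _ = ‖(p : F)‖ ^ v * ‖((i / p ^ v : ℕ) : F)‖ := by push_cast; rw [norm_mul, norm_pow]
    _ = (q : ℝ) ^ (-((e : ℤ) * v)) := by
        rw [norm_coprime_eq_one' hp hpF hnd, hpe, mul_one, ← zpow_natCast ((q:ℝ) ^ (-(e:ℤ))) v,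
          ← zpow_mul]
        ring_nf

lemma norm_add_eq_left' {u v : F} (h : ‖v‖ < ‖u‖) : ‖u + v‖ = ‖u‖ := by
  refine le_antisymm ((norm_add_le_max u v).trans (max_le le_rfl h.le)) ?_
  by_contra hc
  push_neg at hc
  have h2 : ‖u‖ ≤ max ‖u + v‖ ‖v‖ := by
    have he : u = (u + v) + (-v) := by ring
    calc ‖u‖ = ‖(u + v) + (-v)‖ := by rw [← he]
      _ ≤ max ‖u + v‖ ‖-v‖ := norm_add_le_max _ _
      _ = max ‖u + v‖ ‖v‖ := by rw [norm_neg]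
  rcases le_max_iff.mp h2 with h3 | h3 <;> linarith

end helpers


/-- **Lemma 4.1(a)**: let `F` be a nonarchimedean local field of characteristic `0` with
residue characteristic `p` and ramification index `e` (i.e. `‖(p : F)‖ = q^{-e}`).  For
`a, α ≠ 0` and `n ≥ 1`, the map `x ↦ α x^n` is scaling of ratio `‖α‖ ‖n‖ ‖a‖^{n-1}` on
the disk `D(a, ‖a‖ q^{-(e+1)})`. -/
theorem scaling_alpha_mul_pow_charZero
    {F : Type*} [NormedField F] [CompleteSpace F] [LocallyCompactSpace F] [CharZero F]
    (hna : ∀ x y : F, ‖x + y‖ ≤ max ‖x‖ ‖y‖)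
    (q : ℕ) (hq : 1 < q)
    (hrange : ∀ x : F, x ≠ 0 → ∃ j : ℤ, ‖x‖ = (q : ℝ) ^ j)
    -- `p` is the residue characteristic and `e` the ramification index
    (p : ℕ) (hp : p.Prime) (hpF : ‖(p : F)‖ < 1)
    (e : ℕ) (he : 0 < e) (hpe : ‖(p : F)‖ = (q : ℝ) ^ (-(e : ℤ)))
    (a α : F) (ha : a ≠ 0) (hα : α ≠ 0)
    (n : ℕ) (hn : 1 ≤ n) :
    ∀ x y : F, ‖x - a‖ ≤ ‖a‖ * (q : ℝ) ^ (-(e + 1 : ℤ)) →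
      ‖y - a‖ ≤ ‖a‖ * (q : ℝ) ^ (-(e + 1 : ℤ)) →
      ‖α * x ^ n - α * y ^ n‖ = ‖α‖ * ‖(n : F)‖ * ‖a‖ ^ (n - 1) * ‖x - y‖ := by
  haveI : IsUltrametricDist F := isUltrametricDist_of_forall_norm_add_le_max_norm hna
  obtain ⟨m, rfl⟩ : ∃ m, n = m + 1 := ⟨n - 1, by omega⟩
  intro x y hx hy
  by_cases ht0 : x = y
  · simp [ht0]
  set t := x - y with ht_def
  have htne : t ≠ 0 := sub_ne_zero.mpr ht0
  have hq0 : (0:ℝ) < q := by positivity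
  have hq1 : (1:ℝ) < q := by exact_mod_cast hq
  have hqne : (q:ℝ) ≠ 0 := ne_of_gt hq0
  set r : ℝ := (q : ℝ) ^ (-(e + 1 : ℤ)) with hr_def
  have hr_pos : 0 < r := zpow_pos hq0 _
  have hr1 : r < 1 := by
    rw [hr_def]
    calc (q:ℝ) ^ (-(e + 1 : ℤ)) < (q:ℝ) ^ (0 : ℤ) := by
          apply zpow_lt_zpow_right₀ hq1; omega
      _ = 1 := by simp
  have hapos : 0 < ‖a‖ := norm_pos_iff.mpr ha
  have hra : ‖a‖ * r < ‖a‖ := by nlinarith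
  -- ‖y‖ = ‖a‖
  have hynorm : ‖y‖ = ‖a‖ := by
    have hy' : ‖y - a‖ < ‖a‖ := lt_of_le_of_lt hy hra
    have h1 : ‖y‖ ≤ ‖a‖ := by
      have hh : y = a + (y - a) := by ring
      calc ‖y‖ = ‖a + (y - a)‖ := by rw [← hh]
        _ ≤ max ‖a‖ ‖y - a‖ := norm_add_le_max _ _
        _ ≤ ‖a‖ := max_le le_rfl hy'.le
    have h2 : ‖a‖ ≤ max ‖y‖ ‖y - a‖ := by
      have hh : a = y + (a - y) := by ring
      calc ‖a‖ = ‖y + (a - y)‖ := by rw [← hh]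
        _ ≤ max ‖y‖ ‖a - y‖ := norm_add_le_max _ _
        _ = max ‖y‖ ‖y - a‖ := by rw [norm_sub_rev]
    rcases le_max_iff.mp h2 with h3 | h3
    · linarith
    · linarith
  have htle : ‖t‖ ≤ ‖a‖ * r := by
    have hh : t = (x - a) + (-(y - a)) := by rw [ht_def]; ring
    calc ‖t‖ = ‖(x - a) + (-(y - a))‖ := by rw [← hh]
      _ ≤ max ‖x - a‖ ‖-(y - a)‖ := norm_add_le_max _ _
      _ = max ‖x - a‖ ‖y - a‖ := by rw [norm_neg]
      _ ≤ ‖a‖ * r := max_le hx hy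
  have htpos : 0 < ‖t‖ := norm_pos_iff.mpr htne
  -- key per-term bound
  have hNnorm_pos : 0 < ‖((m + 1 : ℕ) : F)‖ := by
    exact norm_pos_iff.mpr (Nat.cast_ne_zero.mpr (Nat.succ_ne_zero m))
  have hkey : ∀ i : ℕ, 2 ≤ i → i ≤ m + 1 →
      ‖t‖ ^ i * ‖a‖ ^ (m + 1 - i) * ‖((m+1).choose i : F)‖
        ≤ (‖((m + 1 : ℕ) : F)‖ * ‖a‖ ^ m * ‖t‖) * (q:ℝ)⁻¹ := by
    intro i h2 hiN
    set v := i.factorization p with hv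
    have hine : i ≠ 0 := by omega
    have hiF : ‖(i : F)‖ = (q:ℝ) ^ (-((e:ℤ) * v)) := norm_eq_of_padic hp hpF hpe hine
    -- v ≤ i - 1
    have hvle : v + 1 ≤ i := by
      have h1 : p ^ v ≤ i := Nat.ordProj_le p hine
      have h2' : 2 ^ v ≤ p ^ v := Nat.pow_le_pow_left hp.two_le v
      have h3 : v < 2 ^ v := Nat.lt_two_pow_self
      omega
    -- choose bound
    have hid : (m+1) * m.choose (i-1) = (m+1).choose i * i := by
      have h := Nat.add_one_mul_choose_eq m (i-1)
      simpa [Nat.succ_eq_add_one, show i - 1 + 1 = i from by omega] using h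
    have hcast : ((m + 1 : ℕ) : F) * (m.choose (i-1) : F) = ((m+1).choose i : F) * (i : F) := by
      exact_mod_cast congrArg (fun k : ℕ => (k : F)) hid
    have hCh : ‖((m+1).choose i : F)‖ * ‖(i : F)‖ ≤ ‖((m + 1 : ℕ) : F)‖ := by
      calc ‖((m+1).choose i : F)‖ * ‖(i : F)‖ = ‖((m+1).choose i : F) * (i : F)‖ := (norm_mul _ _).symm
        _ = ‖((m + 1 : ℕ) : F) * (m.choose (i-1) : F)‖ := by rw [← hcast]
        _ = ‖((m + 1 : ℕ) : F)‖ * ‖(m.choose (i-1) : F)‖ := norm_mul _ _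
        _ ≤ ‖((m + 1 : ℕ) : F)‖ * 1 := by
            have := norm_natCast_le_one F (m.choose (i-1))
            nlinarith [hNnorm_pos]
        _ = ‖((m + 1 : ℕ) : F)‖ := mul_one _
    have hqpow_pos : (0:ℝ) < (q:ℝ) ^ ((e:ℤ) * v) := zpow_pos hq0 _
    have hChle : ‖((m+1).choose i : F)‖ ≤ ‖((m + 1 : ℕ) : F)‖ * (q:ℝ) ^ ((e:ℤ) * v) := by
      have hcc : (q:ℝ) ^ (-((e:ℤ) * v)) * (q:ℝ) ^ ((e:ℤ) * v) = 1 := by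
        rw [← zpow_add₀ hqne]; simp
      calc ‖((m+1).choose i : F)‖
          = (‖((m+1).choose i : F)‖ * ‖(i : F)‖) * (q:ℝ) ^ ((e:ℤ) * v) := by
            rw [hiF, mul_assoc, hcc, mul_one]
        _ ≤ ‖((m + 1 : ℕ) : F)‖ * (q:ℝ) ^ ((e:ℤ) * v) := by
            exact mul_le_mul_of_nonneg_right hCh hqpow_pos.le
    -- q-power smallness
    have hq_small : r ^ (i-1) * (q:ℝ) ^ ((e:ℤ) * v) ≤ (q:ℝ)⁻¹ := by
      have hr_pow : r ^ (i-1) = (q:ℝ) ^ ((-(e + 1 : ℤ)) * (i-1 : ℕ)) := by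
        rw [hr_def, ← zpow_natCast ((q:ℝ) ^ (-(e + 1 : ℤ))) (i-1), ← zpow_mul]
      rw [hr_pow, ← zpow_add₀ hqne, ← zpow_neg_one]
      apply zpow_le_zpow_right₀ hq1.le
      have hvle' : (v:ℤ) ≤ ((i - 1 : ℕ) : ℤ) := by exact_mod_cast Nat.le_of_lt_succ (by omega)
      have hw1 : (1:ℤ) ≤ ((i - 1 : ℕ) : ℤ) := by exact_mod_cast (by omega : 1 ≤ i - 1)
      have he1 : (1:ℤ) ≤ (e:ℤ) := by exact_mod_cast he
      nlinarith
    have ht_pow : ‖t‖ ^ i ≤ ‖t‖ * (‖a‖ * r) ^ (i-1) := by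
      have : ‖t‖ ^ i = ‖t‖ * ‖t‖ ^ (i-1) := by
        rw [← pow_succ']
        congr 1
        omega
      rw [this]
      have := pow_le_pow_left₀ (norm_nonneg t) htle (i-1)
      nlinarith [pow_nonneg (norm_nonneg t) (i-1)]
    have ha_pow : ‖a‖ ^ (i-1) * ‖a‖ ^ (m + 1 - i) = ‖a‖ ^ m := by
      rw [← pow_add]; congr 1; omega
    calc ‖t‖ ^ i * ‖a‖ ^ (m + 1 - i) * ‖((m+1).choose i : F)‖
        ≤ (‖t‖ * (‖a‖ * r) ^ (i-1)) * ‖a‖ ^ (m + 1 - i)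
            * (‖((m + 1 : ℕ) : F)‖ * (q:ℝ) ^ ((e:ℤ) * v)) := by
          apply mul_le_mul
          · apply mul_le_mul_of_nonneg_right ht_pow (by positivity)
          · exact hChle
          · exact norm_nonneg _
          · positivity
      _ = (‖((m + 1 : ℕ) : F)‖ * (‖a‖ ^ (i-1) * ‖a‖ ^ (m + 1 - i)) * ‖t‖)
            * (r ^ (i-1) * (q:ℝ) ^ ((e:ℤ) * v)) := by
          rw [mul_pow]; ring
      _ = (‖((m + 1 : ℕ) : F)‖ * ‖a‖ ^ m * ‖t‖) * (r ^ (i-1) * (q:ℝ) ^ ((e:ℤ) * v)) := by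
          rw [ha_pow]
      _ ≤ (‖((m + 1 : ℕ) : F)‖ * ‖a‖ ^ m * ‖t‖) * (q:ℝ)⁻¹ := by
          apply mul_le_mul_of_nonneg_left hq_small
          positivity
  -- binomial expansion
  have hxy : x = t + y := by rw [ht_def]; ring
  have hexp : x ^ (m+1) = (∑ k ∈ Finset.range m,
        t ^ (k+2) * y ^ (m + 1 - (k+2)) * ((m+1).choose (k+2) : F))
      + t * y ^ m * ((m + 1 : ℕ) : F) + y ^ (m+1) := by
    rw [hxy, add_pow, Finset.sum_range_succ' _ (m+1), Finset.sum_range_succ']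
    simp [Nat.choose_one_right]
    try ring
  have hsplit : α * x ^ (m+1) - α * y ^ (m+1)
      = α * (t * y ^ m * ((m + 1 : ℕ) : F))
        + α * (∑ k ∈ Finset.range m,
            t ^ (k+2) * y ^ (m + 1 - (k+2)) * ((m+1).choose (k+2) : F)) := by
    rw [hexp]; ring
  have hαpos : 0 < ‖α‖ := norm_pos_iff.mpr hα
  set M : ℝ := ‖α‖ * (‖((m + 1 : ℕ) : F)‖ * ‖a‖ ^ m * ‖t‖) with hM_def
  have hMpos : 0 < M := by positivity
  have hmain_norm : ‖α * (t * y ^ m * ((m + 1 : ℕ) : F))‖ = M := by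
    rw [hM_def]
    rw [norm_mul, norm_mul, norm_mul, norm_pow, hynorm]
    ring
  have hR_norm : ‖α * (∑ k ∈ Finset.range m,
      t ^ (k+2) * y ^ (m + 1 - (k+2)) * ((m+1).choose (k+2) : F))‖ ≤ M * (q:ℝ)⁻¹ := by
    rw [norm_mul]
    have hsum : ‖∑ k ∈ Finset.range m,
        t ^ (k+2) * y ^ (m + 1 - (k+2)) * ((m+1).choose (k+2) : F)‖
        ≤ (‖((m + 1 : ℕ) : F)‖ * ‖a‖ ^ m * ‖t‖) * (q:ℝ)⁻¹ := by
      apply norm_sum_le_of_forall_le_of_nonneg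
      · positivity
      · intro k hk
        rw [norm_mul, norm_mul, norm_pow, norm_pow, hynorm]
        exact hkey (k+2) (by omega) (by
          have := Finset.mem_range.mp hk; omega)
    calc ‖α‖ * ‖∑ k ∈ Finset.range m,
          t ^ (k+2) * y ^ (m + 1 - (k+2)) * ((m+1).choose (k+2) : F)‖
        ≤ ‖α‖ * ((‖((m + 1 : ℕ) : F)‖ * ‖a‖ ^ m * ‖t‖) * (q:ℝ)⁻¹) :=
          mul_le_mul_of_nonneg_left hsum hαpos.le
      _ = M * (q:ℝ)⁻¹ := by rw [hM_def]; ring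
  have hRlt : ‖α * (∑ k ∈ Finset.range m,
      t ^ (k+2) * y ^ (m + 1 - (k+2)) * ((m+1).choose (k+2) : F))‖
      < ‖α * (t * y ^ m * ((m + 1 : ℕ) : F))‖ := by
    rw [hmain_norm]
    have hqinv : (q:ℝ)⁻¹ < 1 := by
      rw [inv_lt_one_iff₀]; right; exact hq1
    calc ‖α * (∑ k ∈ Finset.range m,
        t ^ (k+2) * y ^ (m + 1 - (k+2)) * ((m+1).choose (k+2) : F))‖
        ≤ M * (q:ℝ)⁻¹ := hR_norm
      _ < M := by
          have := mul_lt_mul_of_pos_left hqinv hMpos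
          simpa using this
  rw [hsplit, norm_add_eq_left' hRlt, hmain_norm, hM_def]
  simp only [Nat.add_sub_cancel]
  ring
end

section
/- Let a, α ∈ F with a ≠ 0 and α ≠ 0, let n ≥ 1 be an integer, and let v := v_p(n) be the p-adic valuation of n (the largest integer r with p^r ∣ n). Then for all x, y ∈ F with ‖x − a‖ < ‖a‖ and ‖y − a‖ < ‖a‖: ‖α·x^n − α·y^n‖ = ‖α‖·‖a‖^{n − p^v}·‖x − y‖^{p^v}. In particular, if p ∤ n then ‖α·x^n − α·y^n‖ = ‖α‖·‖a‖^{n−1}·‖x − y‖. -/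
section Aux
variable {F : Type*} [NormedField F]

private lemma aux_add_eq (hna : ∀ x y : F, ‖x + y‖ ≤ max ‖x‖ ‖y‖)
    {b c : F} (h : ‖b‖ < ‖c‖) : ‖c + b‖ = ‖c‖ := by
  refine le_antisymm ((hna c b).trans (max_le le_rfl h.le)) ?_
  have h2 := hna (c + b) (-b)
  simp only [add_neg_cancel_right, norm_neg] at h2
  rcases max_cases ‖c + b‖ ‖b‖ with ⟨he, _⟩ | ⟨he, hle⟩
  · exact h2.trans he.le
  · exact absurd (h2.trans_eq he) (not_le.mpr h)

private lemma aux_sum_lt (hna : ∀ x y : F, ‖x + y‖ ≤ max ‖x‖ ‖y‖)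
    {M : ℝ} (hM : 0 < M) (m : ℕ) (f : ℕ → F) (hf : ∀ i < m, ‖f i‖ < M) :
    ‖∑ i ∈ Finset.range m, f i‖ < M := by
  induction m with
  | zero => simpa using hM
  | succ k ih =>
    rw [Finset.sum_range_succ]
    refine (hna _ _).trans_lt (max_lt ?_ (hf k (by omega)))
    exact ih fun i hi => hf i (by omega)

private lemma aux_norm_eq (hna : ∀ x y : F, ‖x + y‖ ≤ max ‖x‖ ‖y‖)
    {a x : F} (ha : a ≠ 0) (hx : ‖x - a‖ < ‖a‖) : ‖x‖ = ‖a‖ := by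
  have := aux_add_eq hna (c := a) (b := x - a) hx
  rwa [add_sub_cancel] at this

private lemma aux_pow_close (hna : ∀ x y : F, ‖x + y‖ ≤ max ‖x‖ ‖y‖)
    {a x : F} (ha : a ≠ 0) (hx : ‖x - a‖ < ‖a‖) (i : ℕ) :
    ‖x ^ i - a ^ i‖ < ‖a‖ ^ i := by
  have ha' : (0:ℝ) < ‖a‖ := norm_pos_iff.mpr ha
  induction i with
  | zero => simpa using ha'
  | succ k ih =>
    have : x ^ (k+1) - a ^ (k+1) = x * (x ^ k - a ^ k) + (x - a) * a ^ k := by ring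
    rw [this]
    refine (hna _ _).trans_lt (max_lt ?_ ?_)
    · rw [norm_mul, aux_norm_eq hna ha hx, pow_succ, mul_comm (‖a‖^k)]
      exact (mul_lt_mul_iff_right₀ ha').mpr ih
    · rw [norm_mul, norm_pow, pow_succ, mul_comm (‖a‖^k)]
      exact (mul_lt_mul_iff_left₀ (pow_pos ha' k)).mpr hx

private lemma aux_cast_norm_one (hna : ∀ x y : F, ‖x + y‖ ≤ max ‖x‖ ‖y‖)
    (p : ℕ) (hp : p.Prime) [CharP F p] {m : ℕ} (hm : ¬ p ∣ m) :
    ‖(m : F)‖ = 1 := by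
  haveI : Fact p.Prime := ⟨hp⟩
  have hm0 : (m : F) ≠ 0 := by
    rwa [Ne, CharP.cast_eq_zero_iff F p]
  have hfrob : ((m : F)) ^ p = (m : F) := by
    have h1 : (m : F) ^ p = ((m ^ p : ℕ) : F) := by push_cast; ring
    rw [h1, CharP.natCast_eq_natCast F p]
    exact (ZMod.natCast_eq_natCast_iff _ _ _).mp (by push_cast; exact ZMod.pow_card _)
  have hnorm : ‖(m : F)‖ ^ p = ‖(m : F)‖ := by
    rw [← norm_pow, hfrob]
  have hpos : (0:ℝ) < ‖(m : F)‖ := norm_pos_iff.mpr hm0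
  have hp1 : ‖(m : F)‖ ^ (p - 1) = 1 := by
    have hps : p - 1 + 1 = p := Nat.succ_pred_eq_of_pos hp.pos
    have : ‖(m : F)‖ ^ (p - 1) * ‖(m : F)‖ = 1 * ‖(m : F)‖ := by
      rw [one_mul, ← pow_succ, hps, hnorm]
    exact mul_right_cancel₀ hpos.ne' this
  have hp2 := hp.two_le
  rcases pow_eq_one_iff_cases.mp hp1 with h | h | ⟨h, _⟩
  · omega
  · exact h
  · nlinarith

/-- key: for p ∤ m, ‖x^m - y^m‖ = ‖a‖^(m-1) * ‖x-y‖ -/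
private lemma aux_key (hna : ∀ x y : F, ‖x + y‖ ≤ max ‖x‖ ‖y‖)
    (p : ℕ) (hp : p.Prime) [CharP F p]
    {a x y : F} (ha : a ≠ 0) (hx : ‖x - a‖ < ‖a‖) (hy : ‖y - a‖ < ‖a‖)
    {m : ℕ} (hm1 : 1 ≤ m) (hm : ¬ p ∣ m) :
    ‖x ^ m - y ^ m‖ = ‖a‖ ^ (m - 1) * ‖x - y‖ := by
  have ha' : (0:ℝ) < ‖a‖ := norm_pos_iff.mpr ha
  have hgs := geom_sum₂_mul x y m
  rw [← hgs, norm_mul]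
  congr 1
  -- ‖∑ i in range m, x^i * y^(m-1-i)‖ = ‖a‖^(m-1)
  have hS : (∑ i ∈ Finset.range m, x ^ i * y ^ (m - 1 - i))
      = (m : F) * a ^ (m-1) + ∑ i ∈ Finset.range m, (x ^ i * y ^ (m-1-i) - a ^ (m-1)) := by
    rw [Finset.sum_sub_distrib, Finset.sum_const, Finset.card_range]
    simp [nsmul_eq_mul]
  rw [hS, aux_add_eq hna, norm_mul, aux_cast_norm_one hna p hp hm, one_mul, norm_pow]
  rw [norm_mul, aux_cast_norm_one hna p hp hm, one_mul, norm_pow]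
  refine aux_sum_lt hna (pow_pos ha' _) m _ fun i hi => ?_
  have hterm : x ^ i * y ^ (m-1-i) - a ^ (m-1)
      = x ^ i * (y ^ (m-1-i) - a ^ (m-1-i)) + a ^ (m-1-i) * (x ^ i - a ^ i) := by
    have : a ^ (m-1) = a ^ i * a ^ (m-1-i) := by rw [← pow_add]; congr 1; omega
    rw [this]; ring
  rw [hterm]
  have hcal : ‖a‖ ^ (m-1) = ‖a‖ ^ i * ‖a‖ ^ (m-1-i) := by rw [← pow_add]; congr 1; omega
  refine (hna _ _).trans_lt (max_lt ?_ ?_)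
  · rw [norm_mul, norm_pow, aux_norm_eq hna ha hx, hcal]
    exact (mul_lt_mul_iff_right₀ (pow_pos ha' i)).mpr (aux_pow_close hna ha hy _)
  · rw [norm_mul, norm_pow, hcal, mul_comm (‖a‖^i)]
    exact (mul_lt_mul_iff_right₀ (pow_pos ha' _)).mpr (aux_pow_close hna ha hx _)

end Aux

/-- **Lemma 4.1(b)**: let `F` be a nonarchimedean normed field of characteristic `p > 0`.
For `a, α ≠ 0`, `n ≥ 1` and `v = v_p(n)` the `p`-adic valuation of `n`, one has
`‖α x^n - α y^n‖ = ‖α‖ ‖a‖^{n - p^v} ‖x - y‖^{p^v}` for all `x, y` in the disk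
`{z : ‖z - a‖ < ‖a‖}`; in particular, if `p ∤ n` then `x ↦ α x^n` is scaling of ratio
`‖α‖ ‖a‖^{n-1}` on that disk. -/
theorem scaling_alpha_mul_pow_charP
    {F : Type*} [NormedField F]
    (hna : ∀ x y : F, ‖x + y‖ ≤ max ‖x‖ ‖y‖)
    (p : ℕ) (hp : p.Prime) [CharP F p]
    (a α : F) (ha : a ≠ 0) (hα : α ≠ 0)
    (n : ℕ) (hn : 1 ≤ n) :
    ∀ x y : F, ‖x - a‖ < ‖a‖ → ‖y - a‖ < ‖a‖ →
      (‖α * x ^ n - α * y ^ n‖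
          = ‖α‖ * ‖a‖ ^ (n - p ^ (padicValNat p n)) * ‖x - y‖ ^ (p ^ (padicValNat p n))) ∧
      (¬ p ∣ n → ‖α * x ^ n - α * y ^ n‖ = ‖α‖ * ‖a‖ ^ (n - 1) * ‖x - y‖) := by
  intro x y hx hy
  haveI : Fact p.Prime := ⟨hp⟩
  have hn0 : n ≠ 0 := by omega
  have hfac : n.factorization p = padicValNat p n := Nat.factorization_def n hp
  have hnm : n = p ^ padicValNat p n * (n / p ^ padicValNat p n) := by
    have := (Nat.ordProj_mul_ordCompl_eq_self n p).symm
    rwa [hfac] at this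
  have hpm : ¬ p ∣ n / p ^ padicValNat p n := by
    have := Nat.not_dvd_ordCompl hp hn0
    rwa [hfac] at this
  have hm1 : 1 ≤ n / p ^ padicValNat p n := by
    have := Nat.ordCompl_pos p hn0
    rw [hfac] at this
    exact this
  set v := padicValNat p n with hv
  set q := p ^ v with hq
  set m := n / q with hmdef
  have hmain : ‖α * x ^ n - α * y ^ n‖
      = ‖α‖ * ‖a‖ ^ (n - q) * ‖x - y‖ ^ q := by
    have hfr : x ^ n - y ^ n = (x ^ m - y ^ m) ^ q := by
      conv_lhs => rw [hnm]
      rw [mul_comm, pow_mul, pow_mul, hq, ← sub_pow_char_pow]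
    have hexp : (m - 1) * q = n - q := by
      rw [Nat.sub_one_mul, mul_comm m q, ← hnm]
    rw [← mul_sub, norm_mul, hfr, norm_pow, aux_key hna p hp ha hx hy hm1 hpm,
      mul_pow, ← pow_mul, hexp, mul_assoc]
  refine ⟨hmain, fun hpn => ?_⟩
  have hv0 : v = 0 := padicValNat.eq_zero_of_not_dvd hpn
  rw [hmain]
  simp [hq, hv0]
end

section
/- Let p be a prime and let e, γ, k, N be positive integers. Then for every integer n with k ≤ n ≤ N+k−1, the cardinality of the set {m ∈ ℤ : k ≤ m ≤ N+k−1 and m·γ − e·v_p(m) = n·γ − e·v_p(n)} is at most e·log_p(N+k)/γ + 1, where log_p denotes the real logarithm in base p. -/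
open scoped Classical

/-- **Lemma 4.2**: let `p` be a prime and `e, γ, k, N` positive integers.  For every `n`
with `k ≤ n ≤ N + k - 1`, the number of `m` with `k ≤ m ≤ N + k - 1` and
`mγ - e·v_p(m) = nγ - e·v_p(n)` is at most `e·log_p(N + k)/γ + 1`. -/
theorem card_same_scaling_ratio_le
    (p : ℕ) (hp : p.Prime) (e γ k N : ℕ)
    (he : 0 < e) (hγ : 0 < γ) (hk : 0 < k) (hN : 0 < N)
    (n : ℕ) (hn : k ≤ n ∧ n ≤ N + k - 1) :
    (((Finset.Icc k (N + k - 1)).filter fun m : ℕ =>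
        (m : ℤ) * γ - e * padicValNat p m = (n : ℤ) * γ - e * padicValNat p n).card : ℝ)
      ≤ e * Real.logb p (N + k) / γ + 1 := by
  set S := (Finset.Icc k (N + k - 1)).filter fun m : ℕ =>
      (m : ℤ) * γ - e * padicValNat p m = (n : ℤ) * γ - e * padicValNat p n with hS
  set M := e * Nat.log p (N + k) with hM
  set T := (Finset.Icc 0 M).filter fun x : ℕ => x % γ = (e * padicValNat p n) % γ with hT
  have hST : S.card ≤ T.card := by
    apply Finset.card_le_card_of_injOn (fun m => e * padicValNat p m)
    · intro m hm
      simp only [Finset.mem_coe, hS, Finset.mem_filter, Finset.mem_Icc] at hm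
      obtain ⟨⟨hm1, hm2⟩, heq⟩ := hm
      have hm0 : m ≠ 0 := by omega
      have hvle : padicValNat p m ≤ Nat.log p (N + k) := by
        apply Nat.le_log_of_pow_le hp.one_lt
        calc p ^ padicValNat p m ≤ m := Nat.le_of_dvd (by omega) pow_padicValNat_dvd
          _ ≤ N + k := by omega
      simp only [Finset.mem_coe, hT, Finset.mem_filter, Finset.mem_Icc]
      refine ⟨⟨Nat.zero_le _, by exact Nat.mul_le_mul_left e hvle⟩, ?_⟩
      have : (e * padicValNat p m) ≡ (e * padicValNat p n) [MOD γ] := by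
        rw [Nat.modEq_iff_dvd]
        exact ⟨(n : ℤ) - m, by simp only [Nat.cast_mul]; linarith⟩
      exact this
    · intro m1 h1 m2 h2 hfe
      simp only [hS, Finset.coe_filter, Set.mem_setOf_eq, Finset.mem_Icc] at h1 h2
      have hv : padicValNat p m1 = padicValNat p m2 :=
        Nat.eq_of_mul_eq_mul_left he hfe
      have : (m1 : ℤ) * γ = (m2 : ℤ) * γ := by
        have he1 := h1.2
        have he2 := h2.2
        rw [hv] at he1
        linarith
      have hγ' : (γ : ℤ) ≠ 0 := by exact_mod_cast hγ.ne'
      exact_mod_cast mul_right_cancel₀ hγ' this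
  have hTcard : T.card ≤ M / γ + 1 := by
    have : T.card ≤ (Finset.Icc 0 (M / γ)).card := by
      apply Finset.card_le_card_of_injOn (fun x => x / γ)
      · intro x hx
        simp only [Finset.mem_coe, hT, Finset.mem_filter, Finset.mem_Icc] at hx
        simp only [Finset.mem_coe, Finset.mem_Icc]
        exact ⟨Nat.zero_le _, Nat.div_le_div_right hx.1.2⟩
      · intro x1 h1 x2 h2 hdiv
        simp only [hT, Finset.coe_filter, Set.mem_setOf_eq, Finset.mem_Icc] at h1 h2
        have hm : x1 % γ = x2 % γ := h1.2.trans h2.2.symm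
        have hd : x1 / γ = x2 / γ := hdiv
        have e1 := Nat.div_add_mod x1 γ
        have e2 := Nat.div_add_mod x2 γ
        rw [hd, hm] at e1
        omega
    simpa [Nat.card_Icc] using this
  have hfinal : (S.card : ℝ) ≤ (M : ℝ) / γ + 1 := by
    calc (S.card : ℝ) ≤ ((M / γ + 1 : ℕ) : ℝ) := by exact_mod_cast hST.trans hTcard
      _ = ((M / γ : ℕ) : ℝ) + 1 := by push_cast; ring
      _ ≤ (M : ℝ) / γ + 1 := by gcongr; exact Nat.cast_div_le
  refine hfinal.trans ?_
  have hlog : ((Nat.log p (N + k) : ℕ) : ℝ) ≤ Real.logb p (N + k) := by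
    have := Real.natLog_le_logb (N + k) p
    simpa using this
  have : (M : ℝ) ≤ e * Real.logb p (N + k) := by
    rw [hM]
    push_cast
    exact mul_le_mul_of_nonneg_left hlog (by positivity)
  gcongr
end
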